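/- arXiv:2303.05236 — 2 statements merged into one kernel-verified Lean document; each statement's English description precedes it below -/
import Mathlib

section
/- Let g ∈ L¹((0,T)×ℝ³) be nonnegative, let c > 0, and let S ⊂ (0,T)×ℝ³ be a set such that for every (t̂, x̂) ∈ S there exists a sequence r_k → 0 with ∫_{t̂ − 4r_k²}^{t̂} ∫_{B_{2r_k}(x̂)} g(t, x) dx dt ≥ c · r_k for every k. Then the Hausdorff dimension of S with respect to the parabolic metric d((t,x),(s,y)) = max(|t − s|^{1/2}, |x − y|) is at most 1. -/
noncomputable section
open MeasureTheory Set Filter Topology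

abbrev E3 := EuclideanSpace ℝ (Fin 3)

/-- spacetime `ℝ × ℝ³` equipped with the parabolic metric
`d((t,x),(s,y)) = max(|t−s|^{1/2}, |x−y|)` -/
def PPoint : Type := ℝ × E3

/-- the parabolic distance -/
def pdist (p q : PPoint) : ℝ := max (Real.sqrt |p.1 - q.1|) (dist p.2 q.2)

private lemma sqrt_add_le (a b : ℝ) (ha : 0 ≤ a) (hb : 0 ≤ b) :
    Real.sqrt (a + b) ≤ Real.sqrt a + Real.sqrt b := by
  have h : a + b ≤ (Real.sqrt a + Real.sqrt b) ^ 2 := by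
    nlinarith [Real.sq_sqrt ha, Real.sq_sqrt hb, Real.sqrt_nonneg a, Real.sqrt_nonneg b,
      mul_nonneg (Real.sqrt_nonneg a) (Real.sqrt_nonneg b)]
  calc Real.sqrt (a + b) ≤ Real.sqrt ((Real.sqrt a + Real.sqrt b) ^ 2) :=
        Real.sqrt_le_sqrt h
    _ = Real.sqrt a + Real.sqrt b := Real.sqrt_sq (by positivity)

instance : MetricSpace PPoint where
  dist := pdist
  dist_self p := by simp [pdist]
  dist_comm p q := by simp [pdist, abs_sub_comm, dist_comm]
  dist_triangle p q r := by
    have h1 : Real.sqrt |p.1 - r.1| ≤ pdist p q + pdist q r := by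
      have : |p.1 - r.1| ≤ |p.1 - q.1| + |q.1 - r.1| := abs_sub_le _ _ _
      calc Real.sqrt |p.1 - r.1| ≤ Real.sqrt (|p.1 - q.1| + |q.1 - r.1|) :=
            Real.sqrt_le_sqrt this
        _ ≤ Real.sqrt |p.1 - q.1| + Real.sqrt |q.1 - r.1| :=
            sqrt_add_le _ _ (abs_nonneg _) (abs_nonneg _)
        _ ≤ pdist p q + pdist q r :=
            add_le_add (le_max_left _ _) (le_max_left _ _)
    have h2 : dist p.2 r.2 ≤ pdist p q + pdist q r :=
      (dist_triangle p.2 q.2 r.2).trans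
        (add_le_add (le_max_right _ _) (le_max_right _ _))
    exact max_le h1 h2
  eq_of_dist_eq_zero := by
    intro p q h
    have h1 : Real.sqrt |p.1 - q.1| = 0 := by
      have := le_max_left (Real.sqrt |p.1 - q.1|) (dist p.2 q.2)
      have hnn : (0:ℝ) ≤ Real.sqrt |p.1 - q.1| := Real.sqrt_nonneg _
      have : Real.sqrt |p.1 - q.1| ≤ 0 := by
        calc Real.sqrt |p.1 - q.1| ≤ pdist p q := le_max_left _ _
          _ = 0 := h
      linarith
    have h2 : dist p.2 q.2 = 0 := by
      have : dist p.2 q.2 ≤ 0 := by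
        calc dist p.2 q.2 ≤ pdist p q := le_max_right _ _
          _ = 0 := h
      linarith [dist_nonneg (x := p.2) (y := q.2)]
    have ht : p.1 = q.1 := by
      have := (Real.sqrt_eq_zero (abs_nonneg _)).mp h1
      have := abs_eq_zero.mp this
      linarith [sub_eq_zero.mp this]
    have hx : p.2 = q.2 := eq_of_dist_eq_zero h2
    exact Prod.ext ht hx

/-- the identity map from spacetime to parabolic spacetime -/
def toPP (p : ℝ × E3) : PPoint := p

private lemma pdist_eq (p q : PPoint) : dist p q = pdist p q := rfl

private lemma diam_closedBall_le (x : PPoint) (r : ℝ) :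
    EMetric.diam (Metric.closedBall x r) ≤ ENNReal.ofReal (2 * r) := by
  apply EMetric.diam_le
  intro a ha b hb
  rw [edist_dist]
  apply ENNReal.ofReal_le_ofReal
  have h1 : dist a x ≤ r := Metric.mem_closedBall.1 ha
  have h2 : dist b x ≤ r := Metric.mem_closedBall.1 hb
  calc dist a b ≤ dist a x + dist x b := dist_triangle _ _ _
    _ ≤ r + r := by rw [dist_comm x b]; linarith
    _ = 2 * r := by ring

private lemma cover_lemma
    (T : ℝ) (g : ℝ × E3 → ℝ) (c : ℝ) (hc : 0 < c)
    (hg0 : ∀ p : ℝ × E3, 0 ≤ g p)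
    (hg1 : IntegrableOn g (Ioo 0 T ×ˢ (univ : Set E3)))
    (S : Set (ℝ × E3)) (hS : S ⊆ Ioo 0 T ×ˢ (univ : Set E3))
    (hconc : ∀ p ∈ S, ∃ r : ℕ → ℝ, (∀ k, 0 < r k) ∧ Tendsto r atTop (𝓝 0) ∧
      ∀ k, c * r k ≤
        ∫ t in Ioo (p.1 - 4 * r k ^ 2) p.1, ∫ x in Metric.ball p.2 (2 * r k), g (t, x))
    (δ : ℝ) (hδ : 0 < δ) :
    ∃ (u : Set (ℝ × E3)) (ρ : ℝ × E3 → ℝ), u.Countable ∧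
      (∀ q ∈ u, 0 < ρ q ∧ ρ q ≤ δ) ∧
      (toPP '' S ⊆ ⋃ q : u, Metric.closedBall (toPP ↑q) (8 * ρ ↑q)) ∧
      ∑' q : u, ENNReal.ofReal (c * ρ ↑q)
        ≤ ∫⁻ p in Ioo 0 T ×ˢ (univ : Set E3), ENNReal.ofReal (g p) := by
  classical
  set Ω : Set (ℝ × E3) := Ioo 0 T ×ˢ (univ : Set E3) with hΩdef
  -- choose radii
  have hsel : ∀ p : ℝ × E3, ∃ ρ : ℝ, p ∈ S → (0 < ρ ∧ ρ ≤ δ ∧ 4 * ρ ^ 2 < p.1 ∧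
      c * ρ ≤ ∫ t in Ioo (p.1 - 4 * ρ ^ 2) p.1, ∫ x in Metric.ball p.2 (2 * ρ), g (t, x)) := by
    intro p
    by_cases hp : p ∈ S
    · obtain ⟨r, hr0, hrlim, hrint⟩ := hconc p hp
      have hp1 : 0 < p.1 := (hS hp).1.1
      have hε : 0 < min δ (Real.sqrt p.1 / 2) := by
        have := Real.sqrt_pos.2 hp1
        positivity
      obtain ⟨k, hk⟩ := (hrlim.eventually_lt_const hε).exists
      refine ⟨r k, fun _ => ⟨hr0 k, (hk.le.trans (min_le_left _ _)), ?_, hrint k⟩⟩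
      have h2 : r k < Real.sqrt p.1 / 2 := hk.trans_le (min_le_right _ _)
      nlinarith [Real.sq_sqrt hp1.le, hr0 k, Real.sqrt_nonneg p.1]
    · exact ⟨1, fun h => absurd h hp⟩
  choose ρ hρ using hsel
  -- Vitali
  obtain ⟨u, huS, hdisj, hVit⟩ :=
    Vitali.exists_disjoint_subfamily_covering_enlargement_closedBall S toPP
      (fun p => 2 * ρ p) (2 * δ) (fun p hp => by have h := (hρ p hp).2.1; show 2 * ρ p ≤ 2 * δ; linarith) 4 (by norm_num)
  -- cylinders
  set Q : ℝ × E3 → Set (ℝ × E3) :=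
    fun p => Ioo (p.1 - 4 * ρ p ^ 2) p.1 ×ˢ Metric.ball p.2 (2 * ρ p) with hQdef
  have hQm : ∀ p, MeasurableSet (Q p) := fun p =>
    measurableSet_Ioo.prod measurableSet_ball
  have hQΩ : ∀ p ∈ S, Q p ⊆ Ω := by
    intro p hp z hz
    obtain ⟨h1, _⟩ := hz
    have h4 : 4 * ρ p ^ 2 < p.1 := (hρ p hp).2.2.1
    have hpT : p.1 < T := (hS hp).1.2
    have h4' := (hρ p hp).1
    simp only [mem_Ioo] at h1
    exact ⟨mem_Ioo.2 ⟨by nlinarith [h1.1], by linarith [h1.2]⟩, trivial⟩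
  -- Q p sits inside the parabolic closed ball of radius 2 ρ p
  have hQball : ∀ p ∈ S, ∀ z ∈ Q p, toPP z ∈ Metric.closedBall (toPP p) (2 * ρ p) := by
    intro p hp z hz
    obtain ⟨h1, h2⟩ := hz
    simp only [mem_Ioo] at h1
    have hρp : 0 < ρ p := (hρ p hp).1
    rw [Metric.mem_closedBall, pdist_eq]
    apply max_le
    · have habs : |z.1 - p.1| ≤ (2 * ρ p) ^ 2 := by
        rw [abs_le]; constructor <;> nlinarith [h1.1, h1.2]
      calc Real.sqrt |z.1 - p.1| ≤ Real.sqrt ((2 * ρ p) ^ 2) := Real.sqrt_le_sqrt habs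
        _ = 2 * ρ p := Real.sqrt_sq (by positivity)
    · exact le_of_lt (Metric.mem_ball.1 h2)
  -- the weighted measure
  set μ : Measure (ℝ × E3) := volume.withDensity (fun p => ENNReal.ofReal (g p)) with hμdef
  have hΩm : MeasurableSet Ω := measurableSet_Ioo.prod MeasurableSet.univ
  have hμΩ : μ Ω = ∫⁻ p in Ω, ENNReal.ofReal (g p) := withDensity_apply _ hΩm
  have hμΩfin : μ Ω ≠ ⊤ := by
    rw [hμΩ]
    exact ((hasFiniteIntegral_iff_ofReal (ae_of_all _ fun z => hg0 z)).1 hg1.2).ne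
  -- lower bound on μ (Q p)
  have hμQ : ∀ p ∈ S, ENNReal.ofReal (c * ρ p) ≤ μ (Q p) := by
    intro p hp
    have hint : IntegrableOn g (Q p) := hg1.mono_set (hQΩ p hp)
    have hint' : IntegrableOn g
        (Ioo (p.1 - 4 * ρ p ^ 2) p.1 ×ˢ Metric.ball p.2 (2 * ρ p))
        ((volume : Measure ℝ).prod (volume : Measure E3)) := by
      rwa [← Measure.volume_eq_prod]
    have heq : ∫ z in Q p, g z = ∫ t in Ioo (p.1 - 4 * ρ p ^ 2) p.1,
        ∫ x in Metric.ball p.2 (2 * ρ p), g (t, x) := by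
      rw [hQdef]
      rw [show (volume : Measure (ℝ × E3)) = (volume : Measure ℝ).prod volume from
        Measure.volume_eq_prod ℝ E3]
      exact setIntegral_prod g hint'
    calc ENNReal.ofReal (c * ρ p) ≤ ENNReal.ofReal (∫ z in Q p, g z) := by
          apply ENNReal.ofReal_le_ofReal
          rw [heq]; exact (hρ p hp).2.2.2
      _ = ∫⁻ z in Q p, ENNReal.ofReal (g z) :=
          ofReal_integral_eq_lintegral_ofReal hint (ae_of_all _ fun z => hg0 z)
      _ = μ (Q p) := (withDensity_apply _ (hQm p)).symm
  -- pairwise disjointness of the cylinders over u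
  have hQdisj : Pairwise (Function.onFun Disjoint (fun i : u => Q ↑i)) := by
    intro i j hij
    have hb : Disjoint (Metric.closedBall (toPP ↑i) (2 * ρ ↑i))
        (Metric.closedBall (toPP ↑j) (2 * ρ ↑j)) :=
      hdisj i.2 j.2 (fun h => hij (Subtype.ext h))
    rw [Function.onFun, Set.disjoint_left]
    intro z hzi hzj
    exact Set.disjoint_left.1 hb (hQball _ (huS i.2) z hzi) (hQball _ (huS j.2) z hzj)
  -- countability
  have hUfin : μ (⋃ i : u, Q ↑i) ≠ ⊤ := by
    refine ne_top_of_le_ne_top hμΩfin (measure_mono ?_)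
    exact iUnion_subset fun i => hQΩ _ (huS i.2)
  have hcnt : Countable u := by
    have := Measure.countable_meas_pos_of_disjoint_of_meas_iUnion_ne_top μ
      (fun i : u => hQm ↑i) hQdisj hUfin
    have huniv : {i : u | 0 < μ (Q ↑i)} = Set.univ := by
      ext i
      simp only [mem_setOf_eq, mem_univ, iff_true]
      refine lt_of_lt_of_le ?_ (hμQ _ (huS i.2))
      exact ENNReal.ofReal_pos.2 (by have := (hρ _ (huS i.2)).1; positivity)
    rw [huniv] at this
    exact Set.countable_univ_iff.1 this
  haveI := hcnt
  -- conclusion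
  refine ⟨u, ρ, Set.countable_coe_iff.1 hcnt, fun q hq => ⟨(hρ q (huS hq)).1, (hρ q (huS hq)).2.1⟩,
    ?_, ?_⟩
  · rintro _ ⟨p, hp, rfl⟩
    obtain ⟨q, hq, hsub⟩ := hVit p hp
    refine mem_iUnion.2 ⟨⟨q, hq⟩, ?_⟩
    have hmem : toPP p ∈ Metric.closedBall (toPP p) (2 * ρ p) :=
      Metric.mem_closedBall_self (by linarith [(hρ p hp).1])
    have := hsub hmem
    rwa [show (4 : ℝ) * (2 * ρ q) = 8 * ρ q by ring] at this
  · calc ∑' q : u, ENNReal.ofReal (c * ρ ↑q) ≤ ∑' q : u, μ (Q ↑q) :=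
          ENNReal.tsum_le_tsum fun q => hμQ _ (huS q.2)
      _ = μ (⋃ i : u, Q ↑i) := (measure_iUnion hQdisj fun i => hQm ↑i).symm
      _ ≤ μ Ω := measure_mono (iUnion_subset fun i => hQΩ _ (huS i.2))
      _ = _ := hμΩ

/-- **Parabolic partial regularity.** If `g ∈ L¹((0,T)×ℝ³)` is nonnegative, `c > 0`,
and every point `(t̂,x̂)` of `S ⊆ (0,T)×ℝ³` admits radii `r_k → 0` with
`∫_{t̂−4r_k²}^{t̂}∫_{B_{2r_k}(x̂)} g ≥ c r_k`, then `S` has Hausdorff dimension at most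
`1` with respect to the parabolic metric `d((t,x),(s,y)) = max(|t−s|^{1/2}, |x−y|)`. -/
theorem parabolic_singular_set_dimension
    (T : ℝ) (hT : 0 < T) (g : ℝ × E3 → ℝ) (c : ℝ) (hc : 0 < c)
    (hg0 : ∀ p : ℝ × E3, 0 ≤ g p)
    (hg1 : IntegrableOn g (Ioo 0 T ×ˢ (univ : Set E3)))
    (S : Set (ℝ × E3)) (hS : S ⊆ Ioo 0 T ×ˢ (univ : Set E3))
    (hconc : ∀ p ∈ S, ∃ r : ℕ → ℝ, (∀ k, 0 < r k) ∧ Tendsto r atTop (𝓝 0) ∧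
      ∀ k, c * r k ≤
        ∫ t in Ioo (p.1 - 4 * r k ^ 2) p.1, ∫ x in Metric.ball p.2 (2 * r k), g (t, x)) :
    dimH (toPP '' S) ≤ 1 := by
  borelize PPoint
  refine dimH_le fun d' hinf => ?_
  by_contra hd
  push_neg at hd
  have hd1 : (1 : ℝ) < (d' : ℝ) := by exact_mod_cast hd
  set d : ℝ := (d' : ℝ) with hddef
  set M : ENNReal := ∫⁻ p in Ioo 0 T ×ˢ (univ : Set E3), ENNReal.ofReal (g p) with hMdef
  have hM : M ≠ ⊤ :=
    ((hasFiniteIntegral_iff_ofReal (ae_of_all _ fun z => hg0 z)).1 hg1.2).ne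
  -- choose covers at scale 1/(n+1)
  have hδpos : ∀ n : ℕ, (0 : ℝ) < 1 / (n + 1) := fun n => by positivity
  choose u ρ huc hρ hcov hsum using fun n : ℕ =>
    cover_lemma T g c hc hg0 hg1 S hS hconc (1 / (n + 1)) (hδpos n)
  haveI hCnt : ∀ n, Countable ↥(u n) := fun n => (huc n).to_subtype
  -- diameter bounds
  have hdiam : ∀ n : ℕ, ∀ i : u n,
      EMetric.diam (Metric.closedBall (toPP ↑i) (8 * ρ n ↑i))
        ≤ ENNReal.ofReal (16 * ρ n ↑i) := fun n i => by
    refine le_trans (diam_closedBall_le _ _) (le_of_eq ?_)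
    ring_nf
  have hdiam' : ∀ n : ℕ, ∀ i : u n,
      EMetric.diam (Metric.closedBall (toPP ↑i) (8 * ρ n ↑i))
        ≤ ENNReal.ofReal (16 * (1 / (n + 1))) := fun n i =>
    (hdiam n i).trans (ENNReal.ofReal_le_ofReal (by
      have := (hρ n ↑i i.2).2; linarith))
  have hrt : Tendsto (fun n : ℕ => ENNReal.ofReal (16 * (1 / (n + 1)))) atTop (𝓝 0) := by
    have h0 : Tendsto (fun n : ℕ => 16 * (1 / ((n : ℝ) + 1))) atTop (𝓝 0) := by
      have := tendsto_one_div_add_atTop_nhds_zero_nat.const_mul (16 : ℝ)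
      simpa using this
    have := (ENNReal.continuous_ofReal.tendsto 0).comp h0
    rw [ENNReal.ofReal_zero] at this; exact this
  have key := Measure.hausdorffMeasure_le_liminf_tsum (X := PPoint) d (toPP '' S)
    (l := atTop) (fun n : ℕ => ENNReal.ofReal (16 * (1 / (n + 1)))) hrt
    (fun n (i : u n) => Metric.closedBall (toPP ↑i) (8 * ρ n ↑i))
    (Eventually.of_forall fun n => hdiam' n)
    (Eventually.of_forall fun n => hcov n)
  -- bound each sum
  have hterm : ∀ n : ℕ,
      (∑' i : u n, EMetric.diam (Metric.closedBall (toPP ↑i) (8 * ρ n ↑i)) ^ d)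
        ≤ ENNReal.ofReal ((16 * (1 / (n + 1))) ^ (d - 1) * (16 / c)) * M := by
    intro n
    have hstep : ∀ i : u n,
        EMetric.diam (Metric.closedBall (toPP ↑i) (8 * ρ n ↑i)) ^ d
          ≤ ENNReal.ofReal ((16 * (1 / (n + 1))) ^ (d - 1) * (16 / c))
            * ENNReal.ofReal (c * ρ n ↑i) := by
      intro i
      obtain ⟨hρ0, hρδ⟩ := hρ n ↑i i.2
      have h16 : (0 : ℝ) < 16 * ρ n ↑i := by linarith
      calc EMetric.diam (Metric.closedBall (toPP ↑i) (8 * ρ n ↑i)) ^ d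
          ≤ ENNReal.ofReal (16 * ρ n ↑i) ^ d :=
            ENNReal.rpow_le_rpow (hdiam n i) (by linarith)
        _ = ENNReal.ofReal ((16 * ρ n ↑i) ^ d) :=
            ENNReal.ofReal_rpow_of_nonneg h16.le (by linarith)
        _ ≤ ENNReal.ofReal ((16 * (1 / (n + 1))) ^ (d - 1) * ((16 / c) * (c * ρ n ↑i))) := by
            apply ENNReal.ofReal_le_ofReal
            have hsplit : (16 * ρ n ↑i) ^ d
                = (16 * ρ n ↑i) ^ (d - 1) * (16 * ρ n ↑i) := by
              rw [← Real.rpow_add_one h16.ne']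
              ring_nf
            rw [hsplit]
            have h1 : (16 * ρ n ↑i) ^ (d - 1) ≤ (16 * (1 / (n + 1))) ^ (d - 1) :=
              Real.rpow_le_rpow h16.le (by linarith) (by linarith)
            have h2 : (16 : ℝ) * ρ n ↑i = (16 / c) * (c * ρ n ↑i) := by
              field_simp
            rw [h2] at h1 ⊢
            apply mul_le_mul_of_nonneg_right h1
            positivity
        _ = ENNReal.ofReal ((16 * (1 / (n + 1))) ^ (d - 1) * (16 / c))
              * ENNReal.ofReal (c * ρ n ↑i) := by
            rw [← ENNReal.ofReal_mul (by positivity), mul_assoc]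
    calc (∑' i : u n, EMetric.diam (Metric.closedBall (toPP ↑i) (8 * ρ n ↑i)) ^ d)
        ≤ ∑' i : u n, ENNReal.ofReal ((16 * (1 / (n + 1))) ^ (d - 1) * (16 / c))
            * ENNReal.ofReal (c * ρ n ↑i) := ENNReal.tsum_le_tsum hstep
      _ = ENNReal.ofReal ((16 * (1 / (n + 1))) ^ (d - 1) * (16 / c))
            * ∑' i : u n, ENNReal.ofReal (c * ρ n ↑i) := ENNReal.tsum_mul_left
      _ ≤ _ := mul_le_mul_right (hsum n) _
  -- the bounding sequence tends to zero
  have hA : Tendsto (fun n : ℕ =>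
      ENNReal.ofReal ((16 * (1 / (n + 1))) ^ (d - 1) * (16 / c)) * M) atTop (𝓝 0) := by
    have h0 : Tendsto (fun n : ℕ => (16 * (1 / ((n : ℝ) + 1))) ^ (d - 1) * (16 / c))
        atTop (𝓝 0) := by
      have h1 : Tendsto (fun n : ℕ => 16 * (1 / ((n : ℝ) + 1))) atTop (𝓝 0) := by
        have := tendsto_one_div_add_atTop_nhds_zero_nat.const_mul (16 : ℝ)
        simpa using this
      have h2 : ContinuousAt (fun x : ℝ => x ^ (d - 1)) 0 :=
        Real.continuousAt_rpow_const 0 (d - 1) (Or.inr (by linarith))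
      have h3 := (h2.tendsto.comp h1)
      rw [Real.zero_rpow (by linarith : d - 1 ≠ 0)] at h3
      have := h3.mul_const (16 / c)
      simpa using this
    have h4 := (ENNReal.continuous_ofReal.tendsto 0).comp h0
    simp only [Function.comp, ENNReal.ofReal_zero] at h4
    have := ENNReal.Tendsto.mul_const h4 (Or.inr hM)
    simpa using this
  have hliminf : liminf (fun n : ℕ => ∑' i : u n,
      EMetric.diam (Metric.closedBall (toPP ↑i) (8 * ρ n ↑i)) ^ d) atTop = 0 := by
    refine le_antisymm ?_ (zero_le)
    calc liminf _ atTop ≤ liminf (fun n : ℕ =>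
          ENNReal.ofReal ((16 * (1 / (n + 1))) ^ (d - 1) * (16 / c)) * M) atTop :=
          liminf_le_liminf (Eventually.of_forall hterm)
      _ = 0 := hA.liminf_eq
  rw [show liminf (fun n : ℕ => ∑' i : u n,
      Metric.ediam (Metric.closedBall (toPP ↑i) (8 * ρ n ↑i)) ^ d) atTop = 0 from hliminf] at key
  have hzero : μH[d] (toPP '' S) = 0 := le_antisymm key (zero_le)
  rw [hddef] at hzero
  rw [hinf] at hzero
  exact ENNReal.top_ne_zero hzero
end
end

section
/- Let ψ : Δ₂ → ℝ³ be a diffeomorphism onto its image, where Δ₂ ⊂ ℝ² is an open triangle with barycenter at the origin and side lengths between 5/3 and 7/3, satisfying ψ(0) = 0, ∇ψ(0) equal to the natural inclusion ℝ² → ℝ³, and ‖∇²ψ‖_{L∞} ≤ 1/9. Let n(ξ) = (∂₁ψ(ξ) × ∂₂ψ(ξ))/|∂₁ψ(ξ) × ∂₂ψ(ξ)| be the unit normal of the surface ψ(Δ₂). Then the extended map ψ̃ : Δ₂ × (0,2) → ℝ³ defined by ψ̃(ξ, z) = ψ(ξ) − z n(ξ) is a homeomorphism onto its image. -/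
noncomputable section
open MeasureTheory Set Filter Topology RealInnerProductSpace
open scoped Pointwise ENNReal

abbrev E2 := EuclideanSpace ℝ (Fin 2)

def mkE3 (g : Fin 3 → ℝ) : E3 := (WithLp.equiv 2 (Fin 3 → ℝ)).symm g
def e3 (i : Fin 3) : E3 := EuclideanSpace.single i 1
def e2 (i : Fin 2) : E2 := EuclideanSpace.single i 1

/-- partial derivative of a scalar field on `ℝ³` -/
def pd (i : Fin 3) (g : E3 → ℝ) : E3 → ℝ := fun x => fderiv ℝ g x (e3 i)

/-- velocity gradient matrix `(∇v)_{ij} = ∂_j v_i` -/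
def grad (v : E3 → E3) (x : E3) (i j : Fin 3) : ℝ := fderiv ℝ v x (e3 j) i

/-- `|∇v|²` (Frobenius) -/
def gradNormSq (v : E3 → E3) (x : E3) : ℝ := ∑ i, ∑ j, (grad v x i j) ^ 2

/-- divergence -/
def vdiv (v : E3 → E3) (x : E3) : ℝ := ∑ i, grad v x i i

/-- curl -/
def curl3 (v : E3 → E3) (x : E3) : E3 :=
  mkE3 ![grad v x 2 1 - grad v x 1 2, grad v x 0 2 - grad v x 2 0, grad v x 1 0 - grad v x 0 1]

/-- componentwise Laplacian -/
def vlap (v : E3 → E3) (x : E3) : E3 := mkE3 (fun i => ∑ j, pd j (pd j (fun y => v y i)) x)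

/-- gradient of a scalar field, as a vector -/
def gradS (p : E3 → ℝ) (x : E3) : E3 := mkE3 (fun i => pd i p x)

/-- convection term `(u·∇)v` -/
def conv (u v : E3 → E3) (x : E3) : E3 := mkE3 (fun i => ∑ j, u x j * grad v x i j)

/-- time derivative of a time dependent vector field -/
def tderiv (φ : ℝ → E3 → E3) (t : ℝ) (x : E3) : E3 := deriv (fun s => φ s x) t

/-- normal derivative `∂ₙ u` of a vector field with respect to a field `n` of directions -/
def nderiv (n : E3 → E3) (v : E3 → E3) (x : E3) : E3 :=
  mkE3 (fun i => fderiv ℝ (fun y => v y i) x (n x))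

/-- the rate-of-strain tensor `Dv = (∇v + ∇vᵀ)/2` -/
def strain (v : E3 → E3) (x : E3) (i j : Fin 3) : ℝ := (grad v x i j + grad v x j i) / 2

/-- largest absolute eigenvalue of the symmetric matrix `Dv(x)`,
expressed as `sup_{‖ξ‖=1} |ξ · Dv(x) ξ|` -/
def strainEig (v : E3 → E3) (x : E3) : ℝ :=
  sSup ((fun ξ : E3 => |∑ i, ∑ j, ξ i * strain v x i j * ξ j|) '' {ξ : E3 | ‖ξ‖ = 1})

/-- `‖Dv‖_{L∞(Ω)}` -/
def strainSup (v : E3 → E3) (Ω : Set E3) : ℝ := sSup (strainEig v '' Ω)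

/-- sup of the norm of a time-dependent vector field on `I × A` -/
def supNorm (v : ℝ → E3 → E3) (I : Set ℝ) (A : Set E3) : ℝ :=
  sSup ((fun p : ℝ × E3 => ‖v p.1 p.2‖) '' (I ×ˢ A))

/-- sup of the (Frobenius) norm of the spatial gradient on `I × A` -/
def supGradNorm (v : ℝ → E3 → E3) (I : Set ℝ) (A : Set E3) : ℝ :=
  sSup ((fun p : ℝ × E3 => Real.sqrt (gradNormSq (v p.1) p.2)) '' (I ×ˢ A))

/-- surface area of the boundary -/
def bdryArea (Ω : Set E3) : ℝ := (μH[2] (frontier Ω)).toReal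

/-- inner tubular neighborhood `U_δ(∂Ω, Ω)` -/
def tubNbhd (Ω : Set E3) (δ : ℝ) : Set E3 := {x ∈ Ω | Metric.infDist x (frontier Ω) < δ}

/-! ### Curved triangles and cylinders -/

/-- inclusion ℝ² → ℝ³ -/
def i23 (v : E2) : E3 := mkE3 (fun i => if h : (i : ℕ) < 2 then v ⟨(i : ℕ), h⟩ else 0)

/-- cross product on `E3` -/
def cross3 (a b : E3) : E3 :=
  mkE3 (crossProduct ((WithLp.equiv 2 (Fin 3 → ℝ)) a) ((WithLp.equiv 2 (Fin 3 → ℝ)) b))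

/-- `Δ` is an open triangle in `ℝ²` with barycenter `0` and side lengths between `5/3` and
`7/3` -/
def IsBaseTriangle (Δ : Set E2) : Prop :=
  ∃ a b c : E2, Δ = interior (convexHull ℝ {a, b, c}) ∧ a + b + c = 0 ∧
    dist a b ∈ Icc (5/3 : ℝ) (7/3) ∧ dist b c ∈ Icc (5/3 : ℝ) (7/3) ∧
    dist a c ∈ Icc (5/3 : ℝ) (7/3)

/-- membership in the class `Ψ`: a diffeomorphism from `Δ` onto its image in `ℝ³` with
`ψ(0) = 0`, `∇ψ(0)` the natural inclusion, and `‖∇²ψ‖_{L∞} ≤ 1/9`. -/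
structure IsPsi (Δ : Set E2) (ψ : E2 → E3) : Prop where
  triangle : IsBaseTriangle Δ
  smooth : ContDiffOn ℝ (⊤ : ℕ∞) ψ Δ
  inj : InjOn ψ Δ
  immersion : ∀ ξ ∈ Δ, Function.Injective (fderivWithin ℝ ψ Δ ξ)
  mem0 : (0 : E2) ∈ Δ
  map0 : ψ 0 = 0
  deriv0 : ∀ w : E2, fderivWithin ℝ ψ Δ 0 w = i23 w
  hess : ∀ ξ ∈ Δ, ‖fderivWithin ℝ (fderivWithin ℝ ψ Δ) Δ ξ‖ ≤ 1/9

/-- membership in the class `Ψ^{(r)}` -/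
def IsPsiR (r : ℝ) (Δ : Set E2) (ψ : E2 → E3) : Prop :=
  ∃ ψ₀ : E2 → E3, IsPsi Δ ψ₀ ∧ ∃ R : E3 ≃ᵢ E3, ψ = fun ξ => r • R (ψ₀ ξ)

/-- unit normal of the surface `ψ(Δ)` -/
def unitNormal (Δ : Set E2) (ψ : E2 → E3) (ξ : E2) : E3 :=
  ‖cross3 (fderivWithin ℝ ψ Δ ξ (e2 0)) (fderivWithin ℝ ψ Δ ξ (e2 1))‖⁻¹ •
    cross3 (fderivWithin ℝ ψ Δ ξ (e2 0)) (fderivWithin ℝ ψ Δ ξ (e2 1))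

/-- the extension `ψ̃(ξ, z) = ψ(ξ) − r z n(ξ)` of `ψ ∈ Ψ^{(r)}` -/
def psiExt (r : ℝ) (Δ : Set E2) (ψ : E2 → E3) (p : E2 × ℝ) : E3 :=
  ψ p.1 - (r * p.2) • unitNormal Δ ψ p.1

/-- `T` is a curved triangle of size `r` -/
def IsCurvedTriangle (r : ℝ) (T : Set E3) : Prop :=
  ∃ (Δ : Set E2) (ψ : E2 → E3), IsPsiR r Δ ψ ∧ T = ψ '' ((2⁻¹ : ℝ) • Δ)

/-- `C` is the curved triangular cylinder of size `r` with base `T` -/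
def IsCurvedCylinder (r : ℝ) (C T : Set E3) : Prop :=
  ∃ (Δ : Set E2) (ψ : E2 → E3), IsPsiR r Δ ψ ∧ T = ψ '' ((2⁻¹ : ℝ) • Δ) ∧
    C = psiExt r Δ ψ '' (((2⁻¹ : ℝ) • Δ) ×ˢ Ioo (0:ℝ) 1)

/-! ### Smooth domains and Assumption (Ω) -/

/-- `Ω ⊂ ℝ³` is a bounded domain with compact smooth boundary, with outer unit normal
field `n`. -/
structure SmoothDomain (Ω : Set E3) (n : E3 → E3) : Prop where
  isOpen : IsOpen Ω
  nonempty : Ω.Nonempty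
  bounded : Bornology.IsBounded Ω
  smoothBdry : ∀ x ∈ frontier Ω, ∃ (U : Set E3) (g : E3 → ℝ), IsOpen U ∧ x ∈ U ∧
    ContDiff ℝ (⊤ : ℕ∞) g ∧ (∀ y ∈ U, fderiv ℝ g y ≠ 0) ∧
    Ω ∩ U = {y ∈ U | g y < 0} ∧ frontier Ω ∩ U = {y ∈ U | g y = 0}
  unitNormal : ∀ x ∈ frontier Ω, ‖n x‖ = 1
  outward : ∀ x ∈ frontier Ω, ∀ᶠ ε in 𝓝[>] (0:ℝ),
    x - ε • n x ∈ Ω ∧ x + ε • n x ∉ closure Ω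

/-- Assumption (Ω): tubular neighborhood of width `δb` and uniform triangulations. -/
structure DomainAssumption (Ω : Set E3) (δb : ℝ) (n : E3 → E3) extends
    SmoothDomain Ω n : Prop where
  δpos : 0 < δb
  tubInj : InjOn (fun p : E3 × ℝ => p.1 - p.2 • n p.1) (frontier Ω ×ˢ Ioo 0 δb)
  tubImage : (fun p : E3 × ℝ => p.1 - p.2 • n p.1) '' (frontier Ω ×ˢ Ioo 0 δb) =
    tubNbhd Ω δb
  triangulation : ∀ δ ∈ Ioo 0 δb, ∃ Ts : Set (Set E3), Ts.Countable ∧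
    (∀ T ∈ Ts, IsCurvedTriangle δ T ∧ T ⊆ frontier Ω) ∧
    Ts.PairwiseDisjoint id ∧ μH[2] (frontier Ω \ ⋃₀ Ts) = 0

/-! ### Weak solutions of the Navier–Stokes equations -/

/-- admissible test vector fields: smooth, divergence free, compactly supported
in `(0,T) × Ω` -/
def IsTestVF (Ω : Set E3) (T : ℝ) (φ : ℝ → E3 → E3) : Prop :=
  ContDiff ℝ (⊤ : ℕ∞) (fun p : ℝ × E3 => φ p.1 p.2) ∧
  HasCompactSupport (fun p : ℝ × E3 => φ p.1 p.2) ∧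
  tsupport (fun p : ℝ × E3 => φ p.1 p.2) ⊆ Ioo 0 T ×ˢ Ω ∧
  ∀ t : ℝ, ∀ x : E3, vdiv (φ t) x = 0

/-- `u` is a weak (distributional) solution of `(NSE_ν)` on `(0,T) × Ω` with force `f`,
belonging to `C_w(0,T;L²(Ω)) ∩ L²(0,T;H¹(Ω))`, with no-slip boundary condition. -/
structure IsNSEWeak (Ω : Set E3) (T ν : ℝ) (u f : ℝ → E3 → E3) : Prop where
  memL2 : ∀ t ∈ Icc 0 T, MemLp (u t) 2 (volume.restrict Ω)
  weakCont : ∀ w : E3 → E3, MemLp w 2 (volume.restrict Ω) →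
    ContinuousOn (fun t => ∫ x in Ω, ⟪u t x, w x⟫) (Icc 0 T)
  l2h1 : IntegrableOn (fun p : ℝ × E3 => ‖u p.1 p.2‖ ^ 2 + gradNormSq (u p.1) p.2)
    (Ioo 0 T ×ˢ Ω)
  divFree : ∀ t ∈ Ioo 0 T, ∀ x ∈ Ω, vdiv (u t) x = 0
  noSlip : ∀ t ∈ Ioo 0 T, ∀ x ∈ frontier Ω, u t x = 0
  weakEq : ∀ φ : ℝ → E3 → E3, IsTestVF Ω T φ →
    ∫ t in Ioo 0 T, ∫ x in Ω,
      (⟪u t x, tderiv φ t x⟫ + (∑ i, ∑ j, u t x i * u t x j * grad (φ t) x i j)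
        + ν * ⟪u t x, vlap (φ t) x⟫ + ⟪f t x, φ t x⟫) = 0

/-- `u` is a Leray–Hopf weak solution of `(NSE_ν)`: a weak solution satisfying the
energy inequality. -/
structure IsLerayHopf (Ω : Set E3) (T ν : ℝ) (u f : ℝ → E3 → E3) extends
    IsNSEWeak Ω T ν u f : Prop where
  energy : ∀ T' ∈ Icc 0 T,
    (1/2) * ∫ x in Ω, ‖u T' x‖ ^ 2 +
      (∫ t in Ioo 0 T', ∫ x in Ω, ν * gradNormSq (u t) x) ≤
    (1/2) * ∫ x in Ω, ‖u 0 x‖ ^ 2 + ∫ t in Ioo 0 T', ∫ x in Ω, ⟪u t x, f t x⟫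

/-! ### Regular Euler solutions -/

/-- `ub` is a regular solution of the Euler equations `(EE)` on `(0,T) × Ω` with regular
force `fb`, with impermeability boundary condition. -/
structure IsEuler (Ω : Set E3) (n : E3 → E3) (T : ℝ) (ub fb : ℝ → E3 → E3) : Prop where
  reg : ContDiffOn ℝ (⊤ : ℕ∞) (fun p : ℝ × E3 => ub p.1 p.2) (Icc 0 T ×ˢ closure Ω)
  divFree : ∀ t ∈ Ioo 0 T, ∀ x ∈ Ω, vdiv (ub t) x = 0
  slip : ∀ t ∈ Ioo 0 T, ∀ x ∈ frontier Ω, ⟪ub t x, n x⟫ = 0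
  eq : ∃ P : ℝ → E3 → ℝ, ∀ t ∈ Ioo 0 T, ∀ x ∈ Ω,
    tderiv ub t x + conv (ub t) (ub t) x + gradS (P t) x = fb t x

/-! ### Inviscid-limit quantities -/

/-- an admissible family `(u^ν, f^ν)_{ν>0}` of Leray–Hopf solutions converging to the
Euler data -/
def AdmissibleFamily (Ω : Set E3) (T : ℝ) (ub fb : ℝ → E3 → E3)
    (u f : ℝ → ℝ → E3 → E3) : Prop :=
  (∀ ν : ℝ, 0 < ν → IsLerayHopf Ω T ν (u ν) (f ν)) ∧
  Tendsto (fun ν => ∫ x in Ω, ‖u ν 0 x - ub 0 x‖ ^ 2) (𝓝[>] 0) (𝓝 0) ∧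
  Tendsto (fun ν => ∫ t in Ioo 0 T, Real.sqrt (∫ x in Ω, ‖f ν t x - fb t x‖ ^ 2))
    (𝓝[>] 0) (𝓝 0)

/-- layer separation `LS(ū)` -/
def LS (Ω : Set E3) (T : ℝ) (ub fb : ℝ → E3 → E3) : ℝ :=
  sSup {l : ℝ | ∃ u f : ℝ → ℝ → E3 → E3, AdmissibleFamily Ω T ub fb u f ∧
    l = limsup (fun ν => ∫ x in Ω, ‖u ν T x - ub T x‖ ^ 2) (𝓝[>] 0)}

/-- anomalous dissipation `AD(ū)` -/
def AD (Ω : Set E3) (T : ℝ) (ub fb : ℝ → E3 → E3) : ℝ :=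
  sSup {l : ℝ | ∃ u f : ℝ → ℝ → E3 → E3, AdmissibleFamily Ω T ub fb u f ∧
    l = limsup (fun ν => ∫ t in Ioo 0 T, ∫ x in Ω, ν * gradNormSq (u ν t) x) (𝓝[>] 0)}

/-- limiting energy dissipation `AD_{cν}(ū)` in the boundary layer of width `cν` -/
def ADlayer (Ω : Set E3) (T c : ℝ) (ub fb : ℝ → E3 → E3) : ℝ :=
  sSup {l : ℝ | ∃ u f : ℝ → ℝ → E3 → E3, AdmissibleFamily Ω T ub fb u f ∧
    l = limsup (fun ν => ∫ t in Ioo 0 T, ∫ x in tubNbhd Ω (c * ν),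
        ν * gradNormSq (u ν t) x) (𝓝[>] 0)}

/-- limiting work of the drag force `W_drag(ū)` -/
def Wdrag (Ω : Set E3) (n : E3 → E3) (T : ℝ) (ub fb : ℝ → E3 → E3) : ℝ :=
  sSup {l : ℝ | ∃ u f : ℝ → ℝ → E3 → E3, AdmissibleFamily Ω T ub fb u f ∧
    l = limsup (fun ν => ν * ∫ t in Ioo 0 T, ∫ x in frontier Ω,
        ⟪nderiv n (u ν t) x, ub t x⟫ ∂μH[2]) (𝓝[>] 0)}

/-- `∫₀ᵀ ‖Dū(t)‖_{L∞(Ω)} dt` -/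
def strainIntegral (Ω : Set E3) (T : ℝ) (ub : ℝ → E3 → E3) : ℝ :=
  ∫ t in Ioo 0 T, strainSup (ub t) Ω

set_option linter.unusedVariables false
set_option linter.unusedSectionVars false

lemma cross3_apply (a b : E3) :
    cross3 a b = mkE3 ![a 1 * b 2 - a 2 * b 1, a 2 * b 0 - a 0 * b 2, a 0 * b 1 - a 1 * b 0] := by
  simp [cross3, cross_apply]

lemma mkE3_apply (g : Fin 3 → ℝ) (i : Fin 3) : mkE3 g i = g i := rfl

lemma inner3 (x y : E3) : ⟪x, y⟫ = x 0 * y 0 + x 1 * y 1 + x 2 * y 2 := by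
  simp [PiLp.inner_apply, Fin.sum_univ_three]; ring

lemma inner2 (x y : E2) : ⟪x, y⟫ = x 0 * y 0 + x 1 * y 1 := by
  simp [PiLp.inner_apply, Fin.sum_univ_two]; ring

lemma normsq3 (x : E3) : ‖x‖ ^ 2 = x 0 ^ 2 + x 1 ^ 2 + x 2 ^ 2 := by
  rw [← real_inner_self_eq_norm_sq, inner3]; ring

lemma normsq2 (x : E2) : ‖x‖ ^ 2 = x 0 ^ 2 + x 1 ^ 2 := by
  rw [← real_inner_self_eq_norm_sq, inner2]; ring

lemma inner_cross3_left (a b : E3) : ⟪cross3 a b, a⟫ = 0 := by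
  rw [cross3_apply, inner3]; simp [mkE3_apply]; ring

lemma inner_cross3_right (a b : E3) : ⟪cross3 a b, b⟫ = 0 := by
  rw [cross3_apply, inner3]; simp [mkE3_apply]; ring

lemma abs_comp_le3 (x : E3) (i : Fin 3) : |x i| ≤ ‖x‖ := by
  have h := abs_real_inner_le_norm (EuclideanSpace.single i (1:ℝ)) x
  simpa [EuclideanSpace.inner_single_left, EuclideanSpace.norm_single] using h

lemma abs_comp_le2 (x : E2) (i : Fin 2) : |x i| ≤ ‖x‖ := by
  have h := abs_real_inner_le_norm (EuclideanSpace.single i (1:ℝ)) x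
  simpa [EuclideanSpace.inner_single_left, EuclideanSpace.norm_single] using h

lemma norm_cross3_le (a b : E3) : ‖cross3 a b‖ ≤ ‖a‖ * ‖b‖ := by
  have h1 : ‖cross3 a b‖ ^ 2 ≤ (‖a‖ * ‖b‖) ^ 2 := by
    rw [cross3_apply, normsq3, mul_pow, normsq3, normsq3]
    simp only [mkE3_apply, Matrix.cons_val_zero, Matrix.cons_val_one, Matrix.head_cons,
      Matrix.cons_val_two, Matrix.tail_cons]
    nlinarith [sq_nonneg (a 0 * b 0 + a 1 * b 1 + a 2 * b 2)]
  nlinarith [norm_nonneg (cross3 a b), mul_nonneg (norm_nonneg a) (norm_nonneg b)]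

lemma cross3_sub_left (a a' b : E3) : cross3 a b - cross3 a' b = cross3 (a - a') b := by
  simp only [cross3_apply]; ext i; fin_cases i <;>
    simp [mkE3_apply] <;> ring

lemma cross3_sub_right (a b b' : E3) : cross3 a b - cross3 a b' = cross3 a (b - b') := by
  simp only [cross3_apply]; ext i; fin_cases i <;>
    simp [mkE3_apply] <;> ring

lemma normalize_lip {x y : E3} {m : ℝ} (hm : 0 < m) (hx : m ≤ ‖x‖) (hy : m ≤ ‖y‖) :
    ‖‖x‖⁻¹ • x - ‖y‖⁻¹ • y‖ ≤ (2 / m) * ‖x - y‖ := by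
  have hx0 : (0:ℝ) < ‖x‖ := lt_of_lt_of_le hm hx
  have hy0 : (0:ℝ) < ‖y‖ := lt_of_lt_of_le hm hy
  have key : ‖x‖⁻¹ • x - ‖y‖⁻¹ • y = ‖x‖⁻¹ • (x - y) + (‖x‖⁻¹ - ‖y‖⁻¹) • y := by
    rw [smul_sub, sub_smul]; abel
  rw [key]
  have h1 : ‖‖x‖⁻¹ • (x - y)‖ ≤ m⁻¹ * ‖x - y‖ := by
    rw [norm_smul, norm_inv, norm_norm]; gcongr
  have h3 : |‖y‖ - ‖x‖| ≤ ‖x - y‖ := by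
    rw [abs_sub_comm]; exact abs_norm_sub_norm_le x y
  have h2 : ‖(‖x‖⁻¹ - ‖y‖⁻¹) • y‖ ≤ m⁻¹ * ‖x - y‖ := by
    rw [norm_smul, Real.norm_eq_abs, inv_sub_inv hx0.ne' hy0.ne', abs_div,
      abs_of_pos (mul_pos hx0 hy0)]
    have heq : |‖y‖ - ‖x‖| / (‖x‖ * ‖y‖) * ‖y‖ = |‖y‖ - ‖x‖| * ‖x‖⁻¹ := by
      field_simp
    rw [heq]
    calc |‖y‖ - ‖x‖| * ‖x‖⁻¹ ≤ ‖x - y‖ * m⁻¹ := by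
          apply mul_le_mul h3 _ (by positivity) (norm_nonneg _)
          exact inv_anti₀ hm hx
      _ = m⁻¹ * ‖x - y‖ := by ring
  calc ‖‖x‖⁻¹ • (x - y) + (‖x‖⁻¹ - ‖y‖⁻¹) • y‖
      ≤ ‖‖x‖⁻¹ • (x - y)‖ + ‖(‖x‖⁻¹ - ‖y‖⁻¹) • y‖ := norm_add_le _ _
    _ ≤ m⁻¹ * ‖x - y‖ + m⁻¹ * ‖x - y‖ := add_le_add h1 h2
    _ = (2 / m) * ‖x - y‖ := by ring

lemma chain_lower {φ : ℝ → ℝ} {c K t₁ t₂ : ℝ} (hK : 0 ≤ K) (ht : t₁ ≤ t₂)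
    (h : ∀ s₁ s₂, t₁ ≤ s₁ → s₁ ≤ s₂ → s₂ ≤ t₂ →
      c * (s₂ - s₁) - K * (s₂ - s₁) ^ 2 ≤ φ s₂ - φ s₁) :
    c * (t₂ - t₁) ≤ φ t₂ - φ t₁ := by
  set Δ := t₂ - t₁ with hΔ
  have hΔ0 : 0 ≤ Δ := by simp [hΔ]; linarith
  have key : ∀ n : ℕ, 1 ≤ n → c * Δ - K * Δ ^ 2 / n ≤ φ t₂ - φ t₁ := by
    intro n hn
    have hn0 : (0:ℝ) < n := by exact_mod_cast Nat.pos_of_ne_zero (by omega)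
    set s : ℕ → ℝ := fun k => t₁ + k * (Δ / n) with hs
    have hs0 : s 0 = t₁ := by simp [hs]
    have hsn : s n = t₂ := by
      have h2 : (n:ℝ) * (Δ / n) = Δ := by field_simp
      simp only [hs]; rw [h2, hΔ]; ring
    have hsk : ∀ k : ℕ, k ≤ n → t₁ ≤ s k ∧ s k ≤ t₂ := by
      intro k hk
      constructor
      · have : (0:ℝ) ≤ k * (Δ / n) := by positivity
        simp only [hs]; linarith
      · have hkn : (k:ℝ) ≤ n := by exact_mod_cast hk
        have : (k:ℝ) * (Δ / n) ≤ n * (Δ / n) := by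
          apply mul_le_mul_of_nonneg_right hkn (by positivity)
        have h2 : (n:ℝ) * (Δ / n) = Δ := by field_simp
        simp only [hs]; linarith
    have tele : φ t₂ - φ t₁ = ∑ k ∈ Finset.range n, (φ (s (k + 1)) - φ (s k)) := by
      rw [Finset.sum_range_sub (fun k => φ (s k)) n, hs0, hsn]
    have hstep : ∀ k ∈ Finset.range n,
        c * (Δ / n) - K * (Δ / n) ^ 2 ≤ φ (s (k + 1)) - φ (s k) := by
      intro k hk
      rw [Finset.mem_range] at hk
      have h1 := (hsk k (le_of_lt hk)).1
      have h2 := (hsk (k + 1) hk).2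
      have hd : s (k + 1) - s k = Δ / n := by
        simp only [hs]; push_cast; ring
      have := h (s k) (s (k + 1)) h1 (by rw [← sub_nonneg, hd]; positivity) h2
      rwa [hd] at this
    calc c * Δ - K * Δ ^ 2 / n
        = ∑ _k ∈ Finset.range n, (c * (Δ / n) - K * (Δ / n) ^ 2) := by
          rw [Finset.sum_const, Finset.card_range, nsmul_eq_mul]
          field_simp
      _ ≤ ∑ k ∈ Finset.range n, (φ (s (k + 1)) - φ (s k)) := Finset.sum_le_sum hstep
      _ = φ t₂ - φ t₁ := tele.symm
  have hlim : Tendsto (fun n : ℕ => c * Δ - K * Δ ^ 2 / n) atTop (𝓝 (c * Δ - 0)) :=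
    tendsto_const_nhds.sub (tendsto_const_div_atTop_nhds_zero_nat _)
  rw [sub_zero] at hlim
  exact le_of_tendsto hlim (eventually_atTop.2 ⟨1, key⟩)

lemma vertex_norm_le (x y z : E2) (hsum : x + y + z = 0) (hxy : dist x y ≤ 7/3)
    (hxz : dist x z ≤ 7/3) (hyz : 5/3 ≤ dist y z) : ‖x‖ ≤ 3/2 := by
  have hz : z = -(x + y) := by
    have h : (x + y) + z = 0 := by rw [add_assoc]; rw [← add_assoc]; exact hsum
    exact eq_neg_of_add_eq_zero_right h
  have hsum3 : (x - y) + (x - z) = (3:ℝ) • x := by rw [hz]; module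
  have hpar := parallelogram_law_with_norm ℝ (x - y) (x - z)
  rw [hsum3] at hpar
  have hdiff : (x - y) - (x - z) = z - y := by abel
  rw [hdiff] at hpar
  have h1 : ‖x - y‖ ≤ 7/3 := by rwa [← dist_eq_norm]
  have h2 : ‖x - z‖ ≤ 7/3 := by rwa [← dist_eq_norm]
  have h3 : 5/3 ≤ ‖z - y‖ := by rwa [dist_comm, dist_eq_norm] at hyz
  have h4 : ‖(3:ℝ) • x‖ = 3 * ‖x‖ := by
    rw [norm_smul]; simp
  rw [h4] at hpar
  nlinarith [norm_nonneg x, norm_nonneg (x - y), norm_nonneg (x - z), norm_nonneg (z - y)]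

lemma IsBaseTriangle.isOpen {Δ : Set E2} (h : IsBaseTriangle Δ) : IsOpen Δ := by
  obtain ⟨a, b, c, rfl, -⟩ := h; exact isOpen_interior

lemma IsBaseTriangle.convex {Δ : Set E2} (h : IsBaseTriangle Δ) : Convex ℝ Δ := by
  obtain ⟨a, b, c, rfl, -⟩ := h; exact (convex_convexHull ℝ _).interior

lemma IsBaseTriangle.norm_le {Δ : Set E2} (h : IsBaseTriangle Δ) :
    ∀ ξ ∈ Δ, ‖ξ‖ ≤ 3/2 := by
  obtain ⟨a, b, c, rfl, hsum, hab, hbc, hac⟩ := h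
  intro ξ hξ
  have hsub : convexHull ℝ ({a, b, c} : Set E2) ⊆ Metric.closedBall 0 (3/2) := by
    apply convexHull_min _ (convex_closedBall 0 (3/2))
    intro v hv
    simp only [Set.mem_insert_iff, Set.mem_singleton_iff] at hv
    rw [Metric.mem_closedBall, dist_zero_right]
    rcases hv with rfl | rfl | rfl
    · exact vertex_norm_le v b c hsum hab.2 hac.2 hbc.1
    · apply vertex_norm_le v a c (by rw [← hsum]; abel) (by rw [dist_comm]; exact hab.2)
        hbc.2 hac.1
    · apply vertex_norm_le v a b (by rw [← hsum]; abel) (by rw [dist_comm]; exact hac.2)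
        (by rw [dist_comm]; exact hbc.2) hab.1
  have := hsub (interior_subset hξ)
  rwa [Metric.mem_closedBall, dist_zero_right] at this

lemma i23_norm (w : E2) : ‖i23 w‖ = ‖w‖ := by
  rw [EuclideanSpace.norm_eq, EuclideanSpace.norm_eq]
  congr 1
  rw [Fin.sum_univ_three, Fin.sum_univ_two]
  have h0 : i23 w 0 = w 0 := by simp [i23, mkE3]
  have h1 : i23 w 1 = w 1 := by simp [i23, mkE3]
  have h2 : i23 w 2 = 0 := by simp [i23, mkE3]
  rw [h0, h1, h2]
  simp

lemma i23_e2 (i : Fin 2) : i23 (e2 i) = e3 ⟨i, by omega⟩ := by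
  ext j
  fin_cases i <;> fin_cases j <;>
    simp [i23, mkE3, e2, e3, EuclideanSpace.single_apply]

lemma decompE2 (w : E2) : w = w 0 • e2 0 + w 1 • e2 1 := by
  ext i
  fin_cases i <;> simp [e2, EuclideanSpace.single_apply]

section PsiFacts
variable {Δ : Set E2} {ψ : E2 → E3} (hψ : IsPsi Δ ψ)

local notation "DD" => fderivWithin ℝ ψ Δ

include hψ

lemma IsPsi.hasFDerivAt {ξ : E2} (hξ : ξ ∈ Δ) : HasFDerivAt ψ (DD ξ) ξ := by
  have hd : DifferentiableOn ℝ ψ Δ := hψ.smooth.differentiableOn (by simp)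
  have h2 := (hd ξ hξ).differentiableAt (hψ.triangle.isOpen.mem_nhds hξ)
  rw [fderivWithin_of_isOpen hψ.triangle.isOpen hξ]
  exact h2.hasFDerivAt

lemma IsPsi.dlip {ζ₁ ζ₂ : E2} (h₁ : ζ₁ ∈ Δ) (h₂ : ζ₂ ∈ Δ) :
    ‖DD ζ₂ - DD ζ₁‖ ≤ 1/9 * ‖ζ₂ - ζ₁‖ := by
  have hdiff : DifferentiableOn ℝ (fderivWithin ℝ ψ Δ) Δ :=
    (hψ.smooth.fderivWithin (m := 1) hψ.triangle.isOpen.uniqueDiffOn (by exact WithTop.coe_le_coe.mpr le_top)).differentiableOn one_ne_zero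
  exact Convex.norm_image_sub_le_of_norm_fderivWithin_le hdiff hψ.hess
    hψ.triangle.convex h₁ h₂

lemma IsPsi.d_near {ξ : E2} (hξ : ξ ∈ Δ) (w : E2) :
    ‖DD ξ w - i23 w‖ ≤ 1/6 * ‖w‖ := by
  have h1 : DD ξ w - i23 w = (DD ξ - DD 0) w := by
    rw [ContinuousLinearMap.sub_apply, hψ.deriv0 w]
  rw [h1]
  calc ‖(DD ξ - DD 0) w‖ ≤ ‖DD ξ - DD 0‖ * ‖w‖ := (DD ξ - DD 0).le_opNorm w
    _ ≤ (1/9 * ‖ξ - 0‖) * ‖w‖ := by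
        apply mul_le_mul_of_nonneg_right (hψ.dlip hψ.mem0 hξ) (norm_nonneg w)
    _ ≤ 1/6 * ‖w‖ := by
        have := hψ.triangle.norm_le ξ hξ
        rw [sub_zero]
        apply mul_le_mul_of_nonneg_right _ (norm_nonneg w)
        linarith

lemma IsPsi.d_ub {ξ : E2} (hξ : ξ ∈ Δ) (w : E2) : ‖DD ξ w‖ ≤ 7/6 * ‖w‖ := by
  have h := hψ.d_near hξ w
  have h2 : ‖DD ξ w‖ ≤ ‖i23 w‖ + ‖DD ξ w - i23 w‖ := by
    have := norm_add_le (i23 w) (DD ξ w - i23 w)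
    simpa using this
  rw [i23_norm] at h2
  linarith

lemma IsPsi.d_lb {ξ : E2} (hξ : ξ ∈ Δ) (w : E2) : 5/6 * ‖w‖ ≤ ‖DD ξ w‖ := by
  have h := hψ.d_near hξ w
  have h2 : ‖i23 w‖ ≤ ‖DD ξ w‖ + ‖DD ξ w - i23 w‖ := by
    calc ‖i23 w‖ = ‖DD ξ w - (DD ξ w - i23 w)‖ := by rw [sub_sub_cancel]
      _ ≤ ‖DD ξ w‖ + ‖DD ξ w - i23 w‖ := norm_sub_le _ _
  rw [i23_norm] at h2
  linarith

lemma IsPsi.taylor {ζ₁ ζ₂ : E2} (h₁ : ζ₁ ∈ Δ) (h₂ : ζ₂ ∈ Δ) :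
    ‖ψ ζ₂ - ψ ζ₁ - DD ζ₁ (ζ₂ - ζ₁)‖ ≤ 1/9 * ‖ζ₂ - ζ₁‖ ^ 2 := by
  have hseg : segment ℝ ζ₁ ζ₂ ⊆ Δ := hψ.triangle.convex.segment_subset h₁ h₂
  have hball : segment ℝ ζ₁ ζ₂ ⊆ Metric.closedBall ζ₁ ‖ζ₂ - ζ₁‖ := by
    apply (convex_closedBall ζ₁ ‖ζ₂ - ζ₁‖).segment_subset
    · simp
    · rw [Metric.mem_closedBall, dist_eq_norm]
  have key := Convex.norm_image_sub_le_of_norm_hasFDerivWithin_le'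
    (f := ψ) (f' := fun x => DD x) (φ := DD ζ₁) (C := 1/9 * ‖ζ₂ - ζ₁‖)
    (s := segment ℝ ζ₁ ζ₂)
    (fun x hx => (hψ.hasFDerivAt (hseg hx)).hasFDerivWithinAt)
    (fun x hx => by
      have h3 := hψ.dlip h₁ (hseg hx)
      have h4 : ‖x - ζ₁‖ ≤ ‖ζ₂ - ζ₁‖ := by
        have := hball hx
        rwa [Metric.mem_closedBall, dist_eq_norm] at this
      calc ‖DD x - DD ζ₁‖ ≤ 1/9 * ‖x - ζ₁‖ := h3
        _ ≤ 1/9 * ‖ζ₂ - ζ₁‖ := by linarith)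
    (convex_segment ζ₁ ζ₂) (left_mem_segment ℝ ζ₁ ζ₂) (right_mem_segment ℝ ζ₁ ζ₂)
  calc ‖ψ ζ₂ - ψ ζ₁ - DD ζ₁ (ζ₂ - ζ₁)‖ ≤ 1/9 * ‖ζ₂ - ζ₁‖ * ‖ζ₂ - ζ₁‖ := key
    _ = 1/9 * ‖ζ₂ - ζ₁‖ ^ 2 := by ring

lemma IsPsi.lip {ζ₁ ζ₂ : E2} (h₁ : ζ₁ ∈ Δ) (h₂ : ζ₂ ∈ Δ) :
    ‖ψ ζ₂ - ψ ζ₁‖ ≤ 7/6 * ‖ζ₂ - ζ₁‖ := by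
  have hd : DifferentiableOn ℝ ψ Δ := hψ.smooth.differentiableOn (by simp)
  apply Convex.norm_image_sub_le_of_norm_fderivWithin_le hd _ hψ.triangle.convex h₁ h₂
  intro x hx
  exact ContinuousLinearMap.opNorm_le_bound _ (by norm_num) (fun w => hψ.d_ub hx w)

lemma IsPsi.norm_psi_le {ξ : E2} (hξ : ξ ∈ Δ) : ‖ψ ξ‖ ≤ 7/4 := by
  have h := hψ.lip hψ.mem0 hξ
  rw [hψ.map0, sub_zero, sub_zero] at h
  have := hψ.triangle.norm_le ξ hξ
  linarith

end PsiFacts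

section NormalFacts
variable {Δ : Set E2} {ψ : E2 → E3} (hψ : IsPsi Δ ψ)

local notation "DD" => fderivWithin ℝ ψ Δ

/-- the unnormalized normal -/
def ccv (Δ : Set E2) (ψ : E2 → E3) (ξ : E2) : E3 :=
  cross3 (fderivWithin ℝ ψ Δ ξ (e2 0)) (fderivWithin ℝ ψ Δ ξ (e2 1))

lemma unitNormal_eq (ξ : E2) : unitNormal Δ ψ ξ = ‖ccv Δ ψ ξ‖⁻¹ • ccv Δ ψ ξ := rfl

include hψ

lemma IsPsi.d_e2_near {ξ : E2} (hξ : ξ ∈ Δ) (i : Fin 2) :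
    ‖DD ξ (e2 i) - e3 ⟨i, by omega⟩‖ ≤ 1/6 := by
  have h := hψ.d_near hξ (e2 i)
  rw [i23_e2] at h
  have he : ‖e2 i‖ = 1 := by
    rw [show e2 i = EuclideanSpace.single i (1:ℝ) from rfl, EuclideanSpace.norm_single]
    norm_num
  rw [he, mul_one] at h
  exact h

lemma IsPsi.cc_lb {ξ : E2} (hξ : ξ ∈ Δ) : 2/3 ≤ ‖ccv Δ ψ ξ‖ := by
  set v := DD ξ (e2 0) with hv
  set w := DD ξ (e2 1) with hw
  have hv6 := hψ.d_e2_near hξ 0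
  have hw6 := hψ.d_e2_near hξ 1
  have hv0 : |v 0 - 1| ≤ 1/6 := by
    have := abs_comp_le3 (v - e3 ⟨0, by omega⟩) 0
    simp only [PiLp.sub_apply] at this
    have he : e3 (⟨0, by omega⟩ : Fin 3) 0 = 1 := by simp [e3, EuclideanSpace.single_apply]
    rw [he] at this
    exact this.trans hv6
  have hv1 : |v 1| ≤ 1/6 := by
    have := abs_comp_le3 (v - e3 ⟨0, by omega⟩) 1
    simp only [PiLp.sub_apply] at this
    have he : e3 (⟨0, by omega⟩ : Fin 3) 1 = 0 := by simp [e3, EuclideanSpace.single_apply]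
    rw [he, sub_zero] at this
    exact this.trans hv6
  have hw1 : |w 1 - 1| ≤ 1/6 := by
    have := abs_comp_le3 (w - e3 ⟨1, by omega⟩) 1
    simp only [PiLp.sub_apply] at this
    have he : e3 (⟨1, by omega⟩ : Fin 3) 1 = 1 := by simp [e3, EuclideanSpace.single_apply]
    rw [he] at this
    exact this.trans hw6
  have hw0 : |w 0| ≤ 1/6 := by
    have := abs_comp_le3 (w - e3 ⟨1, by omega⟩) 0
    simp only [PiLp.sub_apply] at this
    have he : e3 (⟨1, by omega⟩ : Fin 3) 0 = 0 := by simp [e3, EuclideanSpace.single_apply]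
    rw [he, sub_zero] at this
    exact this.trans hw6
  have hc2 : ccv Δ ψ ξ 2 = v 0 * w 1 - v 1 * w 0 := by
    rw [ccv, cross3_apply, mkE3_apply]
    simp [hv, hw]
  have habs := abs_comp_le3 (ccv Δ ψ ξ) 2
  rw [hc2] at habs
  have h1 : 2/3 ≤ v 0 * w 1 - v 1 * w 0 := by
    rw [abs_le] at hv0 hv1 hw1 hw0
    nlinarith [hv0.1, hv0.2, hv1.1, hv1.2, hw1.1, hw1.2, hw0.1, hw0.2]
  calc (2:ℝ)/3 ≤ v 0 * w 1 - v 1 * w 0 := h1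
    _ ≤ |v 0 * w 1 - v 1 * w 0| := le_abs_self _
    _ ≤ ‖ccv Δ ψ ξ‖ := habs

lemma IsPsi.n_unit {ξ : E2} (hξ : ξ ∈ Δ) : ‖unitNormal Δ ψ ξ‖ = 1 := by
  have h := hψ.cc_lb hξ
  rw [unitNormal_eq, norm_smul, norm_inv, norm_norm, inv_mul_cancel₀]
  linarith

lemma IsPsi.n_orth {ξ : E2} (hξ : ξ ∈ Δ) (w : E2) :
    ⟪unitNormal Δ ψ ξ, DD ξ w⟫ = 0 := by
  have hdec : DD ξ w = w 0 • DD ξ (e2 0) + w 1 • DD ξ (e2 1) := by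
    conv_lhs => rw [decompE2 w]
    rw [map_add, (DD ξ).map_smul, (DD ξ).map_smul]
  rw [unitNormal_eq, hdec, real_inner_smul_left, inner_add_right,
    real_inner_smul_right, real_inner_smul_right, ccv,
    inner_cross3_left, inner_cross3_right]
  ring

lemma IsPsi.n_lip {ξ ξ' : E2} (hξ : ξ ∈ Δ) (hξ' : ξ' ∈ Δ) :
    ‖unitNormal Δ ψ ξ - unitNormal Δ ψ ξ'‖ ≤ 7/9 * ‖ξ - ξ'‖ := by
  set v := DD ξ (e2 0); set w := DD ξ (e2 1)
  set v' := DD ξ' (e2 0); set w' := DD ξ' (e2 1)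
  have he : ∀ i : Fin 2, ‖e2 i‖ = 1 := by
    intro i
    rw [show e2 i = EuclideanSpace.single i (1:ℝ) from rfl, EuclideanSpace.norm_single]
    norm_num
  have hvd : ‖v - v'‖ ≤ 1/9 * ‖ξ - ξ'‖ := by
    have h1 : v - v' = (DD ξ - DD ξ') (e2 0) := by
      rw [ContinuousLinearMap.sub_apply]
    rw [h1]
    calc ‖(DD ξ - DD ξ') (e2 0)‖ ≤ ‖DD ξ - DD ξ'‖ * ‖e2 0‖ := (DD ξ - DD ξ').le_opNorm _
      _ ≤ 1/9 * ‖ξ - ξ'‖ := by rw [he 0, mul_one]; exact hψ.dlip hξ' hξ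
  have hwd : ‖w - w'‖ ≤ 1/9 * ‖ξ - ξ'‖ := by
    have h1 : w - w' = (DD ξ - DD ξ') (e2 1) := by
      rw [ContinuousLinearMap.sub_apply]
    rw [h1]
    calc ‖(DD ξ - DD ξ') (e2 1)‖ ≤ ‖DD ξ - DD ξ'‖ * ‖e2 1‖ := (DD ξ - DD ξ').le_opNorm _
      _ ≤ 1/9 * ‖ξ - ξ'‖ := by rw [he 1, mul_one]; exact hψ.dlip hξ' hξ
  have hwub : ‖w‖ ≤ 7/6 := by
    have := hψ.d_ub hξ (e2 1); rwa [he 1, mul_one] at this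
  have hv'ub : ‖v'‖ ≤ 7/6 := by
    have := hψ.d_ub hξ' (e2 0); rwa [he 0, mul_one] at this
  have hcd : ‖ccv Δ ψ ξ - ccv Δ ψ ξ'‖ ≤ 7/27 * ‖ξ - ξ'‖ := by
    have hsplit : ccv Δ ψ ξ - ccv Δ ψ ξ' = cross3 (v - v') w + cross3 v' (w - w') := by
      rw [← cross3_sub_left, ← cross3_sub_right, ccv, ccv]
      abel
    rw [hsplit]
    calc ‖cross3 (v - v') w + cross3 v' (w - w')‖
        ≤ ‖cross3 (v - v') w‖ + ‖cross3 v' (w - w')‖ := norm_add_le _ _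
      _ ≤ ‖v - v'‖ * ‖w‖ + ‖v'‖ * ‖w - w'‖ :=
          add_le_add (norm_cross3_le _ _) (norm_cross3_le _ _)
      _ ≤ (1/9 * ‖ξ - ξ'‖) * (7/6) + (7/6) * (1/9 * ‖ξ - ξ'‖) := by
          apply add_le_add
          · apply mul_le_mul hvd hwub (norm_nonneg _) (by positivity)
          · apply mul_le_mul hv'ub hwd (norm_nonneg _) (by norm_num)
      _ = 7/27 * ‖ξ - ξ'‖ := by ring
  have hnl := normalize_lip (x := ccv Δ ψ ξ) (y := ccv Δ ψ ξ') (m := 2/3)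
    (by norm_num) (hψ.cc_lb hξ) (hψ.cc_lb hξ')
  rw [unitNormal_eq, unitNormal_eq]
  calc ‖‖ccv Δ ψ ξ‖⁻¹ • ccv Δ ψ ξ - ‖ccv Δ ψ ξ'‖⁻¹ • ccv Δ ψ ξ'‖
      ≤ (2 / (2/3)) * ‖ccv Δ ψ ξ - ccv Δ ψ ξ'‖ := hnl
    _ ≤ 3 * (7/27 * ‖ξ - ξ'‖) := by
        rw [show (2:ℝ) / (2/3) = 3 by norm_num]
        apply mul_le_mul_of_nonneg_left hcd (by norm_num)
    _ = 7/9 * ‖ξ - ξ'‖ := by ring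

end NormalFacts

section Key
variable {Δ : Set E2} {ψ : E2 → E3} (hψ : IsPsi Δ ψ)

local notation "DD" => fderivWithin ℝ ψ Δ

include hψ

set_option maxHeartbeats 2000000 in
lemma IsPsi.key_lower {ξ ξ' : E2} (hξ : ξ ∈ Δ) (hξ' : ξ' ∈ Δ) {z : ℝ}
    (hz0 : 0 < z) (hz2 : z ≤ 2) :
    z ^ 2 + ‖ξ' - ξ‖ ^ 2 / 24 ≤ ‖ψ ξ' - (ψ ξ - z • unitNormal Δ ψ ξ)‖ ^ 2 := by
  set n := unitNormal Δ ψ ξ with hn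
  set u := ξ' - ξ with hu
  set p := ψ ξ - z • n with hp
  set γ : ℝ → E2 := fun t => ξ + t • u with hγ
  have hmem : ∀ t ∈ Icc (0:ℝ) 1, γ t ∈ Δ := by
    intro t ht
    have h1 : γ t ∈ segment ℝ ξ ξ' := by
      rw [segment_eq_image']
      exact ⟨t, ht, rfl⟩
    exact hψ.triangle.convex.segment_subset hξ hξ' h1
  have hu3 : ‖u‖ ≤ 3 := by
    have h1 := hψ.triangle.norm_le ξ hξ
    have h2 := hψ.triangle.norm_le ξ' hξ'
    calc ‖u‖ ≤ ‖ξ'‖ + ‖ξ‖ := norm_sub_le _ _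
      _ ≤ 3 := by linarith
  have hpb : ‖p‖ ≤ 15/4 := by
    have h1 := hψ.norm_psi_le hξ
    have h2 : ‖z • n‖ = z := by
      rw [norm_smul, Real.norm_eq_abs, abs_of_pos hz0, hψ.n_unit hξ, mul_one]
    calc ‖p‖ ≤ ‖ψ ξ‖ + ‖z • n‖ := norm_sub_le _ _
      _ ≤ 15/4 := by rw [h2]; linarith
  set g : ℝ → ℝ := fun t => ‖ψ (γ t) - p‖ ^ 2 with hg_def
  set g' : ℝ → ℝ := fun t => 2 * ⟪ψ (γ t) - p, DD (γ t) u⟫ with hg'_def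
  have hg : ∀ t ∈ Icc (0:ℝ) 1, HasDerivAt g (g' t) t := by
    intro t ht
    have hγd : HasDerivAt γ u t := by
      have h1 : HasDerivAt (fun s : ℝ => s • u) ((1:ℝ) • u) t := (hasDerivAt_id t).smul_const u
      rw [one_smul] at h1
      exact h1.const_add ξ
    have hψd2 : HasDerivAt (fun s => ψ (γ s)) (DD (γ t) u) t :=
      (hψ.hasFDerivAt (hmem t ht)).comp_hasDerivAt t hγd
    have hvd : HasDerivAt (fun s => ψ (γ s) - p) (DD (γ t) u) t := hψd2.sub_const p
    have hin := HasDerivAt.inner ℝ hvd hvd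
    have hfun : g = fun s => ⟪ψ (γ s) - p, ψ (γ s) - p⟫ :=
      funext fun s => (real_inner_self_eq_norm_sq _).symm
    have hval : (⟪ψ (γ t) - p, DD (γ t) u⟫ + ⟪DD (γ t) u, ψ (γ t) - p⟫ : ℝ) = g' t := by
      have hcomm : (⟪DD (γ t) u, ψ (γ t) - p⟫ : ℝ) = ⟪ψ (γ t) - p, DD (γ t) u⟫ :=
        real_inner_comm _ _
      simp only [hg'_def]
      linarith [hcomm]
    rw [hfun]
    exact hval ▸ hin
  have hγ0 : γ 0 = ξ := by simp [hγ]
  have hγ1 : γ 1 = ξ' := by simp [hγ, hu]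
  have hg'0 : g' 0 = 0 := by
    have h1 : ψ (γ 0) - p = z • n := by rw [hγ0, hp, sub_sub_cancel]
    have h2 : g' 0 = 2 * ⟪ψ (γ 0) - p, DD (γ 0) u⟫ := by rw [hg'_def]
    rw [h2, h1, hγ0, real_inner_smul_left, hn, hψ.n_orth hξ u]
    ring
  have hstep : ∀ s₁ s₂ : ℝ, 0 ≤ s₁ → s₁ ≤ s₂ → s₂ ≤ 1 →
      (1/6 * ‖u‖ ^ 2) * (s₂ - s₁) - (7/9 * ‖u‖ ^ 2) * (s₂ - s₁) ^ 2 ≤ g' s₂ - g' s₁ := by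
    intro s₁ s₂ h0 h12 h21
    have hm₁ : γ s₁ ∈ Δ := hmem s₁ ⟨h0, by linarith⟩
    have hm₂ : γ s₂ ∈ Δ := hmem s₂ ⟨by linarith, h21⟩
    have hΔt0 : 0 ≤ s₂ - s₁ := by linarith
    have hΔt1 : s₂ - s₁ ≤ 1 := by linarith
    have hζζ : γ s₂ - γ s₁ = (s₂ - s₁) • u := by
      simp only [hγ]
      rw [add_sub_add_left_eq_sub, ← sub_smul]
    have hnorm : ‖γ s₂ - γ s₁‖ = (s₂ - s₁) * ‖u‖ := by
      rw [hζζ, norm_smul, Real.norm_eq_abs, abs_of_nonneg hΔt0]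
    have hident : g' s₂ - g' s₁ = 2 * ⟪ψ (γ s₁) - p, DD (γ s₂) u - DD (γ s₁) u⟫
        + 2 * ⟪(ψ (γ s₂) - p) - (ψ (γ s₁) - p), DD (γ s₂) u⟫ := by
      have e1 : g' s₂ = 2 * ⟪ψ (γ s₂) - p, DD (γ s₂) u⟫ := by rw [hg'_def]
      have e2 : g' s₁ = 2 * ⟪ψ (γ s₁) - p, DD (γ s₁) u⟫ := by rw [hg'_def]
      rw [e1, e2]
      simp only [inner_sub_left, inner_sub_right]
      ring
    have hv₁b : ‖ψ (γ s₁) - p‖ ≤ 11/2 := by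
      have := hψ.norm_psi_le hm₁
      calc ‖ψ (γ s₁) - p‖ ≤ ‖ψ (γ s₁)‖ + ‖p‖ := norm_sub_le _ _
        _ ≤ 11/2 := by linarith
    have hBA : ‖DD (γ s₂) u - DD (γ s₁) u‖ ≤ 1/9 * (s₂ - s₁) * ‖u‖ ^ 2 := by
      have h1 : DD (γ s₂) u - DD (γ s₁) u = (DD (γ s₂) - DD (γ s₁)) u := by
        rw [ContinuousLinearMap.sub_apply]
      rw [h1]
      calc ‖(DD (γ s₂) - DD (γ s₁)) u‖ ≤ ‖DD (γ s₂) - DD (γ s₁)‖ * ‖u‖ :=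
            (DD (γ s₂) - DD (γ s₁)).le_opNorm u
        _ ≤ (1/9 * ‖γ s₂ - γ s₁‖) * ‖u‖ :=
            mul_le_mul_of_nonneg_right (hψ.dlip hm₁ hm₂) (norm_nonneg u)
        _ = 1/9 * (s₂ - s₁) * ‖u‖ ^ 2 := by rw [hnorm]; ring
    have hT1 : -(11/9 * (s₂ - s₁) * ‖u‖ ^ 2) ≤
        2 * ⟪ψ (γ s₁) - p, DD (γ s₂) u - DD (γ s₁) u⟫ := by
      have h1 : |⟪ψ (γ s₁) - p, DD (γ s₂) u - DD (γ s₁) u⟫| ≤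
          ‖ψ (γ s₁) - p‖ * ‖DD (γ s₂) u - DD (γ s₁) u‖ := abs_real_inner_le_norm _ _
      have h2 : ‖ψ (γ s₁) - p‖ * ‖DD (γ s₂) u - DD (γ s₁) u‖ ≤
          11/2 * (1/9 * (s₂ - s₁) * ‖u‖ ^ 2) := by
        apply mul_le_mul hv₁b hBA (norm_nonneg _) (by norm_num)
      have h3 := neg_abs_le ⟪ψ (γ s₁) - p, DD (γ s₂) u - DD (γ s₁) u⟫
      linarith
    have hr : ‖ψ (γ s₁) - ψ (γ s₂) - DD (γ s₂) (γ s₁ - γ s₂)‖ ≤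
        1/9 * ((s₂ - s₁) * ‖u‖) ^ 2 := by
      have h1 := hψ.taylor hm₂ hm₁
      rwa [show ‖γ s₁ - γ s₂‖ = (s₂ - s₁) * ‖u‖ by rw [norm_sub_rev, hnorm]] at h1
    have hBlb : 5/6 * ‖u‖ ≤ ‖DD (γ s₂) u‖ := hψ.d_lb hm₂ u
    have hBub : ‖DD (γ s₂) u‖ ≤ 7/6 * ‖u‖ := hψ.d_ub hm₂ u
    have hun : (0:ℝ) ≤ ‖u‖ := norm_nonneg u
    have hT2 : (s₂ - s₁) * (25/18) * ‖u‖ ^ 2 - 7/9 * (s₂ - s₁) ^ 2 * ‖u‖ ^ 2 ≤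
        2 * ⟪(ψ (γ s₂) - p) - (ψ (γ s₁) - p), DD (γ s₂) u⟫ := by
      have hsplit : (ψ (γ s₂) - p) - (ψ (γ s₁) - p) =
          (s₂ - s₁) • DD (γ s₂) u - (ψ (γ s₁) - ψ (γ s₂) - DD (γ s₂) (γ s₁ - γ s₂)) := by
        have h4 : DD (γ s₂) (γ s₁ - γ s₂) = -((s₂ - s₁) • DD (γ s₂) u) := by
          have h5 : γ s₁ - γ s₂ = -((s₂ - s₁) • u) := by rw [← hζζ]; abel
          rw [h5, map_neg, (DD (γ s₂)).map_smul]
        rw [h4]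
        abel
      rw [hsplit, inner_sub_left, real_inner_smul_left, real_inner_self_eq_norm_sq]
      have h6 : |⟪ψ (γ s₁) - ψ (γ s₂) - DD (γ s₂) (γ s₁ - γ s₂), DD (γ s₂) u⟫| ≤
          ‖ψ (γ s₁) - ψ (γ s₂) - DD (γ s₂) (γ s₁ - γ s₂)‖ * ‖DD (γ s₂) u‖ :=
        abs_real_inner_le_norm _ _
      have h7 : ‖ψ (γ s₁) - ψ (γ s₂) - DD (γ s₂) (γ s₁ - γ s₂)‖ * ‖DD (γ s₂) u‖ ≤
          (1/9 * ((s₂ - s₁) * ‖u‖) ^ 2) * (7/6 * ‖u‖) := by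
        apply mul_le_mul hr hBub (norm_nonneg _) (by positivity)
      have h8 := le_abs_self ⟪ψ (γ s₁) - ψ (γ s₂) - DD (γ s₂) (γ s₁ - γ s₂), DD (γ s₂) u⟫
      have h9 : (s₂ - s₁) * (25/36) * ‖u‖ ^ 2 ≤ (s₂ - s₁) * ‖DD (γ s₂) u‖ ^ 2 := by
        have : (25/36) * ‖u‖ ^ 2 ≤ ‖DD (γ s₂) u‖ ^ 2 := by nlinarith
        nlinarith
      have h10 : (1/9 * ((s₂ - s₁) * ‖u‖) ^ 2) * (7/6 * ‖u‖) ≤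
          7/54 * (s₂ - s₁) ^ 2 * ‖u‖ ^ 2 * ‖u‖ := by nlinarith [sq_nonneg (s₂ - s₁)]
      have h11 : 7/54 * (s₂ - s₁) ^ 2 * ‖u‖ ^ 2 * ‖u‖ ≤ 7/18 * (s₂ - s₁) ^ 2 * ‖u‖ ^ 2 := by
        nlinarith [sq_nonneg (s₂ - s₁), sq_nonneg ‖u‖, mul_nonneg (mul_nonneg (sq_nonneg (s₂-s₁)) (sq_nonneg ‖u‖)) hun]
      linarith
    rw [hident]
    nlinarith [hT1, hT2]
  have hg'lb : ∀ t ∈ Icc (0:ℝ) 1, 1/6 * ‖u‖ ^ 2 * t ≤ g' t := by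
    intro t ht
    have h1 := chain_lower (φ := g') (c := 1/6 * ‖u‖ ^ 2) (K := 7/9 * ‖u‖ ^ 2)
      (t₁ := 0) (t₂ := t) (by positivity) ht.1
      (fun s₁ s₂ ha hb hc => hstep s₁ s₂ ha hb (hc.trans ht.2))
    rw [hg'0] at h1
    calc 1/6 * ‖u‖ ^ 2 * t = 1/6 * ‖u‖ ^ 2 * (t - 0) := by ring
      _ ≤ g' t - 0 := h1
      _ = g' t := by ring
  have hcont : ContinuousOn g (Icc (0:ℝ) 1) :=
    fun t ht => ((hg t ht).continuousAt).continuousWithinAt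
  have h05 : g 0 ≤ g (1/2) := by
    obtain ⟨θ, hθ, heq⟩ := exists_hasDerivAt_eq_slope g g' (by norm_num : (0:ℝ) < 1/2)
      (hcont.mono (Icc_subset_Icc le_rfl (by norm_num)))
      (fun x hx => hg x ⟨hx.1.le, by linarith [hx.2]⟩)
    have h1 := hg'lb θ ⟨hθ.1.le, by linarith [hθ.2]⟩
    have h2 : 0 ≤ g' θ := le_trans (mul_nonneg (by positivity) hθ.1.le) h1
    rw [heq] at h2
    have h5 := mul_le_mul_of_nonneg_right h2 (by norm_num : (0:ℝ) ≤ 1/2 - 0)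
    rw [zero_mul, div_mul_cancel₀ _ (by norm_num : (1:ℝ)/2 - 0 ≠ 0)] at h5
    linarith
  have h51 : g (1/2) + ‖u‖ ^ 2 / 24 ≤ g 1 := by
    obtain ⟨θ, hθ, heq⟩ := exists_hasDerivAt_eq_slope g g' (by norm_num : (1:ℝ)/2 < 1)
      (hcont.mono (Icc_subset_Icc (by norm_num) le_rfl))
      (fun x hx => hg x ⟨by linarith [hx.1], hx.2.le⟩)
    have h1 := hg'lb θ ⟨by linarith [hθ.1], hθ.2.le⟩
    have h2 : 1/6 * ‖u‖ ^ 2 * (1/2) ≤ g' θ := by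
      apply le_trans _ h1
      apply mul_le_mul_of_nonneg_left hθ.1.le (by positivity)
    rw [heq] at h2
    have h5 := mul_le_mul_of_nonneg_right h2 (by norm_num : (0:ℝ) ≤ 1 - 1/2)
    rw [div_mul_cancel₀ _ (by norm_num : (1:ℝ) - 1/2 ≠ 0)] at h5
    linarith
  have hg0 : g 0 = z ^ 2 := by
    have h1 : g 0 = ‖ψ (γ 0) - p‖ ^ 2 := by rw [hg_def]
    rw [h1, hγ0, hp, sub_sub_cancel, norm_smul, Real.norm_eq_abs, abs_of_pos hz0,
      hψ.n_unit hξ, mul_one]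
  have hg1 : g 1 = ‖ψ ξ' - p‖ ^ 2 := by
    have h1 : g 1 = ‖ψ (γ 1) - p‖ ^ 2 := by rw [hg_def]
    rw [h1, hγ1]
  rw [← hg1, ← hg0]
  linarith

end Key

lemma psiExt_one_eq (Δ : Set E2) (ψ : E2 → E3) (ξ : E2) (z : ℝ) :
    psiExt 1 Δ ψ (ξ, z) = ψ ξ - z • unitNormal Δ ψ ξ := by
  simp [psiExt]

section Final
variable {Δ : Set E2} {ψ : E2 → E3} (hψ : IsPsi Δ ψ)

include hψ

lemma IsPsi.psiExt_lip {ξ ξ' : E2} {z z' : ℝ} (hξ : ξ ∈ Δ) (hξ' : ξ' ∈ Δ)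
    (hz : z ∈ Ioo (0:ℝ) 2) (hz' : z' ∈ Ioo (0:ℝ) 2) :
    ‖psiExt 1 Δ ψ (ξ, z) - psiExt 1 Δ ψ (ξ', z')‖ ≤ 4 * max ‖ξ - ξ'‖ |z - z'| := by
  rw [psiExt_one_eq, psiExt_one_eq]
  have hsplit : (ψ ξ - z • unitNormal Δ ψ ξ) - (ψ ξ' - z' • unitNormal Δ ψ ξ') =
      (ψ ξ - ψ ξ') - ((z - z') • unitNormal Δ ψ ξ +
        z' • (unitNormal Δ ψ ξ - unitNormal Δ ψ ξ')) := by
    rw [sub_smul, smul_sub]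
    abel
  rw [hsplit]
  have h1 : ‖ψ ξ - ψ ξ'‖ ≤ 7/6 * ‖ξ - ξ'‖ := by
    have := hψ.lip hξ' hξ
    rwa [show ξ - ξ' = ξ - ξ' from rfl] at this
  have h2 : ‖(z - z') • unitNormal Δ ψ ξ‖ ≤ |z - z'| := by
    rw [norm_smul, Real.norm_eq_abs, hψ.n_unit hξ, mul_one]
  have h3 : ‖z' • (unitNormal Δ ψ ξ - unitNormal Δ ψ ξ')‖ ≤ 2 * (7/9 * ‖ξ - ξ'‖) := by
    rw [norm_smul, Real.norm_eq_abs, abs_of_pos hz'.1]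
    have h4 := hψ.n_lip hξ hξ'
    have h5 : z' ≤ 2 := hz'.2.le
    have h6 : (0:ℝ) ≤ 7/9 * ‖ξ - ξ'‖ := by positivity
    nlinarith [norm_nonneg (unitNormal Δ ψ ξ - unitNormal Δ ψ ξ'), hz'.1]
  have hmax1 : ‖ξ - ξ'‖ ≤ max ‖ξ - ξ'‖ |z - z'| := le_max_left _ _
  have hmax2 : |z - z'| ≤ max ‖ξ - ξ'‖ |z - z'| := le_max_right _ _
  calc ‖(ψ ξ - ψ ξ') - ((z - z') • unitNormal Δ ψ ξ +
        z' • (unitNormal Δ ψ ξ - unitNormal Δ ψ ξ'))‖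
      ≤ ‖ψ ξ - ψ ξ'‖ + ‖(z - z') • unitNormal Δ ψ ξ +
          z' • (unitNormal Δ ψ ξ - unitNormal Δ ψ ξ')‖ := norm_sub_le _ _
    _ ≤ ‖ψ ξ - ψ ξ'‖ + (‖(z - z') • unitNormal Δ ψ ξ‖ +
          ‖z' • (unitNormal Δ ψ ξ - unitNormal Δ ψ ξ')‖) := by
        have := norm_add_le ((z - z') • unitNormal Δ ψ ξ)
          (z' • (unitNormal Δ ψ ξ - unitNormal Δ ψ ξ'))
        linarith
    _ ≤ 7/6 * ‖ξ - ξ'‖ + (|z - z'| + 2 * (7/9 * ‖ξ - ξ'‖)) := by linarith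
    _ ≤ 4 * max ‖ξ - ξ'‖ |z - z'| := by
        have h7 : (0:ℝ) ≤ ‖ξ - ξ'‖ := norm_nonneg _
        linarith
  
lemma IsPsi.psiExt_inv_bound {ξ ξ' : E2} {z z' : ℝ} (hξ : ξ ∈ Δ) (hξ' : ξ' ∈ Δ)
    (hz : z ∈ Ioo (0:ℝ) 2) (hz' : z' ∈ Ioo (0:ℝ) 2) :
    ‖ξ - ξ'‖ ^ 2 ≤ 96 * ‖psiExt 1 Δ ψ (ξ, z) - psiExt 1 Δ ψ (ξ', z')‖ +
      24 * ‖psiExt 1 Δ ψ (ξ, z) - psiExt 1 Δ ψ (ξ', z')‖ ^ 2 ∧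
    |z - z'| ≤ 7/6 * ‖ξ - ξ'‖ + ‖psiExt 1 Δ ψ (ξ, z) - psiExt 1 Δ ψ (ξ', z')‖ := by
  set d := ‖psiExt 1 Δ ψ (ξ, z) - psiExt 1 Δ ψ (ξ', z')‖ with hd
  have hd0 : 0 ≤ d := norm_nonneg _
  set p := ψ ξ - z • unitNormal Δ ψ ξ with hp
  set p' := ψ ξ' - z' • unitNormal Δ ψ ξ' with hp'
  have hdpp : ‖p - p'‖ = d := by rw [hd, psiExt_one_eq, psiExt_one_eq]
  have hzn : ‖z • unitNormal Δ ψ ξ‖ = z := by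
    rw [norm_smul, Real.norm_eq_abs, abs_of_pos hz.1, hψ.n_unit hξ, mul_one]
  have hzn' : ‖z' • unitNormal Δ ψ ξ'‖ = z' := by
    rw [norm_smul, Real.norm_eq_abs, abs_of_pos hz'.1, hψ.n_unit hξ', mul_one]
  have hrp : ψ ξ - p = z • unitNormal Δ ψ ξ := by rw [hp, sub_sub_cancel]
  have hrp' : ψ ξ' - p' = z' • unitNormal Δ ψ ξ' := by rw [hp', sub_sub_cancel]
  have h1 := hψ.key_lower hξ hξ' hz.1 hz.2.le
  have h2 := hψ.key_lower hξ' hξ hz'.1 hz'.2.le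
  rw [← hp] at h1
  rw [← hp'] at h2
  have h1b : ‖ψ ξ' - p‖ ≤ z' + d := by
    calc ‖ψ ξ' - p‖ ≤ ‖ψ ξ' - p'‖ + ‖p' - p‖ := by
          have := norm_add_le (ψ ξ' - p') (p' - p)
          simpa [sub_add_sub_cancel] using this
      _ = z' + d := by rw [hrp', hzn', norm_sub_rev, hdpp]
  have h2b : ‖ψ ξ - p'‖ ≤ z + d := by
    calc ‖ψ ξ - p'‖ ≤ ‖ψ ξ - p‖ + ‖p - p'‖ := by
          have := norm_add_le (ψ ξ - p) (p - p')
          simpa [sub_add_sub_cancel] using this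
      _ = z + d := by rw [hrp, hzn, hdpp]
  have h1c : z ^ 2 + ‖ξ' - ξ‖ ^ 2 / 24 ≤ (z' + d) ^ 2 := by
    apply h1.trans
    have h0 : 0 ≤ ‖ψ ξ' - p‖ := norm_nonneg _
    nlinarith [h1b]
  have h2c : z' ^ 2 + ‖ξ - ξ'‖ ^ 2 / 24 ≤ (z + d) ^ 2 := by
    apply h2.trans
    have h0 : 0 ≤ ‖ψ ξ - p'‖ := norm_nonneg _
    nlinarith [h2b]
  rw [norm_sub_rev ξ' ξ] at h1c
  constructor
  · have hzz : z < 2 := hz.2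
    have hzz' : z' < 2 := hz'.2
    nlinarith [h1c, h2c]
  · have h3 : |z - z'| = |‖z • unitNormal Δ ψ ξ‖ - ‖z' • unitNormal Δ ψ ξ'‖| := by
      rw [hzn, hzn']
    rw [h3]
    calc |‖z • unitNormal Δ ψ ξ‖ - ‖z' • unitNormal Δ ψ ξ'‖|
        ≤ ‖z • unitNormal Δ ψ ξ - z' • unitNormal Δ ψ ξ'‖ := abs_norm_sub_norm_le _ _
      _ = ‖(ψ ξ - ψ ξ') - (p - p')‖ := by
          rw [← hrp, ← hrp']
          congr 1
          abel
      _ ≤ ‖ψ ξ - ψ ξ'‖ + ‖p - p'‖ := norm_sub_le _ _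
      _ ≤ 7/6 * ‖ξ - ξ'‖ + d := by
          have := hψ.lip hξ' hξ
          rw [hdpp]
          linarith

end Final

/-- **The extended map is a homeomorphism onto its image.** If `ψ : Δ₂ → ℝ³` belongs to
the class `Ψ` (a diffeomorphism onto its image with `ψ(0) = 0`, `∇ψ(0)` the natural
inclusion and `‖∇²ψ‖_{L∞} ≤ 1/9`), then `ψ̃(ξ,z) = ψ(ξ) − z n(ξ)` is a homeomorphism
from `Δ₂ × (0,2)` onto its image, where `n` is the unit normal of the surface `ψ(Δ₂)`. -/
theorem extended_map_is_homeomorphism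
    (Δ : Set E2) (ψ : E2 → E3) (hψ : IsPsi Δ ψ) :
    Topology.IsEmbedding ((Δ ×ˢ Ioo (0:ℝ) 2).restrict (psiExt 1 Δ ψ)) := by
  apply IsUniformEmbedding.isEmbedding
  rw [Metric.isUniformEmbedding_iff']
  constructor
  · intro ε hε
    refine ⟨ε/4, by positivity, ?_⟩
    rintro ⟨⟨ξ, z⟩, hq⟩ ⟨⟨ξ', z'⟩, hq'⟩ hd
    rw [Subtype.dist_eq, Prod.dist_eq] at hd
    have hdist : dist ((Δ ×ˢ Ioo (0:ℝ) 2).restrict (psiExt 1 Δ ψ) ⟨(ξ, z), hq⟩)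
        ((Δ ×ˢ Ioo (0:ℝ) 2).restrict (psiExt 1 Δ ψ) ⟨(ξ', z'), hq'⟩) =
        ‖psiExt 1 Δ ψ (ξ, z) - psiExt 1 Δ ψ (ξ', z')‖ := dist_eq_norm _ _
    rw [hdist]
    have hb := hψ.psiExt_lip hq.1 hq'.1 hq.2 hq'.2
    have hmax : max ‖ξ - ξ'‖ |z - z'| = max (dist (ξ, z).1 (ξ', z').1) (dist (ξ, z).2 (ξ', z').2) := by
      rw [dist_eq_norm, Real.dist_eq]
    rw [hmax] at hb
    calc ‖psiExt 1 Δ ψ (ξ, z) - psiExt 1 Δ ψ (ξ', z')‖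
        ≤ 4 * (max (dist (ξ, z).1 (ξ', z').1) (dist (ξ, z).2 (ξ', z').2)) := hb
      _ < 4 * (ε/4) := by
          apply mul_lt_mul_of_pos_left _ (by norm_num)
          exact lt_of_le_of_lt le_rfl hd
      _ = ε := by ring
  · intro δ hδ
    have hmc : Continuous (fun d : ℝ => 3 * Real.sqrt (96 * d + 24 * d ^ 2) + d) := by
      continuity
    have hmc0 : (fun d : ℝ => 3 * Real.sqrt (96 * d + 24 * d ^ 2) + d) 0 = 0 := by
      norm_num
    have hat := hmc.continuousAt (x := 0)
    rw [Metric.continuousAt_iff] at hat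
    obtain ⟨ε, hε, hball⟩ := hat δ hδ
    refine ⟨ε, hε, ?_⟩
    rintro ⟨⟨ξ, z⟩, hq⟩ ⟨⟨ξ', z'⟩, hq'⟩ hd
    set d := ‖psiExt 1 Δ ψ (ξ, z) - psiExt 1 Δ ψ (ξ', z')‖ with hddef
    have hd' : dist ((Δ ×ˢ Ioo (0:ℝ) 2).restrict (psiExt 1 Δ ψ) ⟨(ξ, z), hq⟩)
        ((Δ ×ˢ Ioo (0:ℝ) 2).restrict (psiExt 1 Δ ψ) ⟨(ξ', z'), hq'⟩) = d := dist_eq_norm _ _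
    rw [hd'] at hd
    have hd0 : 0 ≤ d := norm_nonneg _
    obtain ⟨hinv1, hinv2⟩ := hψ.psiExt_inv_bound hq.1 hq'.1 hq.2 hq'.2
    rw [← hddef] at hinv1 hinv2
    set s := Real.sqrt (96 * d + 24 * d ^ 2) with hs
    have hs0 : 0 ≤ s := Real.sqrt_nonneg _
    have hξs : ‖ξ - ξ'‖ ≤ s := by
      rw [hs]
      rw [show ‖ξ - ξ'‖ = Real.sqrt (‖ξ - ξ'‖ ^ 2) by rw [Real.sqrt_sq (norm_nonneg _)]]
      exact Real.sqrt_le_sqrt hinv1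
    have hzs : |z - z'| ≤ 7/6 * s + d := by
      calc |z - z'| ≤ 7/6 * ‖ξ - ξ'‖ + d := hinv2
        _ ≤ 7/6 * s + d := by linarith
    have hub : dist (⟨(ξ, z), hq⟩ : ↥(Δ ×ˢ Ioo (0:ℝ) 2)) ⟨(ξ', z'), hq'⟩ ≤ 3 * s + d := by
      rw [Subtype.dist_eq, Prod.dist_eq]
      apply max_le
      · rw [dist_eq_norm]
        show ‖ξ - ξ'‖ ≤ 3 * s + d
        linarith
      · rw [Real.dist_eq]
        show |z - z'| ≤ 3 * s + d
        linarith
    have hmd := hball (x := d) (by rwa [Real.dist_eq, sub_zero, abs_of_nonneg hd0])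
    simp only [mul_zero, zero_pow, ne_eq, OfNat.ofNat_ne_zero, not_false_iff, add_zero,
      Real.sqrt_zero, Real.dist_eq, sub_zero] at hmd
    norm_num at hmd
    have habs : 3 * s + d ≤ |3 * Real.sqrt (96 * d + 24 * d ^ 2) + d| := by
      rw [← hs]
      exact le_abs_self _
    calc dist (⟨(ξ, z), hq⟩ : ↥(Δ ×ˢ Ioo (0:ℝ) 2)) ⟨(ξ', z'), hq'⟩ ≤ 3 * s + d := hub
      _ ≤ |3 * Real.sqrt (96 * d + 24 * d ^ 2) + d| := habs
      _ < δ := hmd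
end
end
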